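/- arXiv:1901.00197 — 4 statements merged into one kernel-verified Lean document; each statement's English description precedes it below -/
import Mathlib

section
/- The unsigned Stirling numbers of the first kind are log-concave in k: for all n ≥ 1 and all k with 1 ≤ k ≤ n − 1, one has s(n, k−1) · s(n, k+1) ≤ s(n, k)². -/
/-- The number of cycles of a permutation of `{1,…,n}` (here `Fin n`),
counting fixed points as cycles of length one. -/
def cycleCount {n : ℕ} (π : Equiv.Perm (Fin n)) : ℕ :=
  π.cycleType.card + (Finset.univ.filter fun x => π x = x).card

/-- The unsigned Stirling number of the first kind `s(n,k)`: the number of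
permutations of an `n`-element set with exactly `k` cycles (fixed points
counting as cycles of length one). -/
def stirlingFirst (n k : ℕ) : ℕ :=
  (Finset.univ.filter fun π : Equiv.Perm (Fin n) => cycleCount π = k).card

/-!
Deleting `0` from a permutation of `Fin (n + 1)` (`Equiv.Perm.decomposeFin`) either removes a
fixed point or shortens the cycle through `0`, so `s(n+1, k+1) = n s(n, k+1) + s(n, k)` and the
cycle-counting numbers agree with Mathlib's `Nat.stirlingFirst`. In terms of generating
polynomials this step multiplies by `x + n`, which preserves log-concavity of sequences without
internal zeros; induction on `n` finishes the proof.
-/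

open Equiv Finset

namespace Equiv.Perm

variable {α : Type*} [Fintype α] [DecidableEq α]

def numCycles (σ : Perm α) : ℕ := σ.cycleType.card + #{x | σ x = x}

theorem numCycles_eq (σ : Perm α) :
    σ.numCycles = σ.cycleType.card + (Fintype.card α - #σ.support) := by
  rw [numCycles, ← card_compl]
  congr 2
  ext x
  simp

theorem IsCycle.card_support_add_card_cycleType_swap_mul {c : Perm α} (hc : c.IsCycle) {a : α}
    (ha : c a ≠ a) :
    #c.support + (swap a (c a) * c).cycleType.card = #(swap a (c a) * c).support + 2 := by
  by_cases hca : c (c a) = a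
  · have hsw : c = swap a (c a) := hc.eq_swap_of_apply_apply_eq_self ha hca
    have hsupp : #c.support = 2 := by rw [hsw]; exact card_support_swap ha.symm
    have hone : swap a (c a) * c = 1 := by nth_rewrite 2 [hsw]; exact swap_mul_self _ _
    simp [hsupp, hone]
  · have ha' : a ∈ c.support := mem_support.2 ha
    rw [(hc.swap_mul ha hca).cycleType, Multiset.card_singleton, support_swap_mul_eq c a hca,
      card_sdiff_of_subset (singleton_subset_iff.2 ha'), card_singleton]
    have := card_pos.2 ⟨a, ha'⟩
    omega

theorem numCycles_swap_mul (σ : Perm α) {a : α} (ha : σ a ≠ a) :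
    (swap a (σ a) * σ).numCycles = σ.numCycles + 1 := by
  -- only the cycle `c` through `a` changes: `swap a (c a) * c` is `c` with `a` cut out
  set c := σ.cycleOf a
  have hc : c.IsCycle := σ.isCycle_cycleOf ha
  have hca : c a = σ a := σ.cycleOf_apply_self a
  set d := σ * c⁻¹
  have hdc : Disjoint d c := disjoint_mul_inv_of_mem_cycleFactorsFinset
    (cycleOf_mem_cycleFactorsFinset_iff.2 (mem_support.2 ha))
  have hσ : σ = d * c := by simp [d]
  have hsplit : swap a (σ a) * σ = (swap a (c a) * c) * d := by
    rw [← hca, hσ, hdc.commute.eq, mul_assoc]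
  have hdisj : Disjoint (swap a (c a) * c) d := hdc.symm.mono
    (fun x hx => (mem_support_swap_mul_imp_mem_support_ne hx).1) le_rfl
  have hcount := hc.card_support_add_card_cycleType_swap_mul (hca ▸ ha)
  have hle := (swap a (σ a) * σ).support.card_le_univ
  have hleσ := σ.support.card_le_univ
  have hctσ : σ.cycleType = d.cycleType + {#c.support} := by
    rw [hσ, hdc.cycleType_mul, hc.cycleType]
  have hsuppσ : #σ.support = #d.support + #c.support := by rw [hσ, hdc.card_support_mul]
  rw [numCycles_eq, numCycles_eq, hctσ, hsuppσ, hsplit, hdisj.cycleType_mul,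
    hdisj.card_support_mul]
  rw [hsplit, hdisj.card_support_mul] at hle
  rw [hsuppσ] at hleσ
  simp only [Multiset.card_add, Multiset.card_singleton]
  omega

section Fin

variable {n : ℕ}

theorem decomposeFin_symm_zero (e : Perm (Fin n)) :
    decomposeFin.symm (0, e) = e.extendDomain (finSuccAboveEquiv 0) := by
  ext x
  refine Fin.cases ?_ (fun i => ?_) x
  · rw [decomposeFin_symm_apply_zero, extendDomain_apply_not_subtype _ _ (by simp)]
  · have h := extendDomain_apply_image e (finSuccAboveEquiv 0) i
    simp only [finSuccAboveEquiv_apply, Fin.succAbove_zero] at h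
    simp [h]

theorem swap_mul_decomposeFin_symm (p : Fin (n + 1)) (e : Perm (Fin n)) :
    swap 0 p * decomposeFin.symm (p, e) = decomposeFin.symm (0, e) := by
  ext x
  refine Fin.cases ?_ (fun i => ?_) x <;> simp

theorem numCycles_decomposeFin_symm_zero (e : Perm (Fin n)) :
    (decomposeFin.symm (0, e)).numCycles = e.numCycles + 1 := by
  have := e.support.card_le_univ
  rw [decomposeFin_symm_zero, numCycles_eq, numCycles_eq, cycleType_extendDomain,
    card_support_extend_domain]
  simp only [Fintype.card_fin] at *
  omega

theorem numCycles_decomposeFin_symm_of_ne_zero {p : Fin (n + 1)} (hp : p ≠ 0)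
    (e : Perm (Fin n)) : (decomposeFin.symm (p, e)).numCycles = e.numCycles := by
  have h := numCycles_swap_mul (decomposeFin.symm (p, e)) (a := 0) (by simpa using hp)
  rw [decomposeFin_symm_apply_zero, swap_mul_decomposeFin_symm,
    numCycles_decomposeFin_symm_zero] at h
  omega

end Fin

end Equiv.Perm

theorem stirlingFirst_eq_card_filter_numCycles (n k : ℕ) :
    stirlingFirst n k = #{π : Perm (Fin n) | π.numCycles = k} := rfl

theorem card_filter_numCycles_succ (n : ℕ) (P : ℕ → Prop) [DecidablePred P] :
    #{π : Perm (Fin (n + 1)) | P π.numCycles} =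
      #{e : Perm (Fin n) | P (e.numCycles + 1)} + n * #{e : Perm (Fin n) | P e.numCycles} := by
  simp only [card_filter]
  rw [← Perm.decomposeFin.symm.sum_comp, Fintype.sum_prod_type, Fin.sum_univ_succ,
    Finset.sum_congr rfl fun e _ => by rw [Perm.numCycles_decomposeFin_symm_zero],
    Finset.sum_congr rfl fun i _ => Finset.sum_congr rfl fun e _ => by
      rw [Perm.numCycles_decomposeFin_symm_of_ne_zero (Fin.succ_ne_zero i)]]
  simp

theorem stirlingFirst_succ_zero (n : ℕ) : stirlingFirst (n + 1) 0 = n * stirlingFirst n 0 := by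
  simp only [stirlingFirst_eq_card_filter_numCycles, card_filter_numCycles_succ n (· = 0)]
  simp

theorem stirlingFirst_succ_succ (n k : ℕ) :
    stirlingFirst (n + 1) (k + 1) = n * stirlingFirst n (k + 1) + stirlingFirst n k := by
  simp only [stirlingFirst_eq_card_filter_numCycles, card_filter_numCycles_succ n (· = k + 1),
    Nat.add_right_cancel_iff]
  exact add_comm _ _

theorem stirlingFirst_eq_nat_stirlingFirst : ∀ n k, stirlingFirst n k = Nat.stirlingFirst n k
  | 0, k => by cases k <;> simp [stirlingFirst, cycleCount, filter_singleton]
  | n + 1, 0 => by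
    rw [stirlingFirst_succ_zero, stirlingFirst_eq_nat_stirlingFirst n 0]
    cases n <;> simp
  | n + 1, k + 1 => by
    rw [stirlingFirst_succ_succ, Nat.stirlingFirst_succ_succ, stirlingFirst_eq_nat_stirlingFirst n,
      stirlingFirst_eq_nat_stirlingFirst n]

def LogConcave (a : ℕ → ℕ) : Prop := ∀ k, a k * a (k + 2) ≤ a (k + 1) ^ 2

def NoInternalZeros (a : ℕ → ℕ) : Prop :=
  ∀ ⦃i j l⦄, i ≤ j → j ≤ l → a i ≠ 0 → a l ≠ 0 → a j ≠ 0

namespace LogConcave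

variable {a : ℕ → ℕ}

theorem mul_le_mul_of_noInternalZeros (ha : LogConcave a) (hz : NoInternalZeros a) (k : ℕ) :
    a k * a (k + 3) ≤ a (k + 1) * a (k + 2) := by
  rcases Nat.eq_zero_or_pos (a (k + 1) * a (k + 2)) with h | h
  · have : a k = 0 ∨ a (k + 3) = 0 := by
      by_contra! h'
      have h1 := hz (by omega : k ≤ k + 1) (by omega : k + 1 ≤ k + 3) h'.1 h'.2
      have h2 := hz (by omega : k ≤ k + 2) (by omega : k + 2 ≤ k + 3) h'.1 h'.2
      simp_all
    rcases this with h0 | h0 <;> simp [h0]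
  · refine Nat.le_of_mul_le_mul_left ?_ h
    calc a (k + 1) * a (k + 2) * (a k * a (k + 3))
        = (a k * a (k + 2)) * (a (k + 1) * a (k + 3)) := by ring
      _ ≤ a (k + 1) ^ 2 * a (k + 2) ^ 2 := Nat.mul_le_mul (ha k) (ha (k + 1))
      _ = a (k + 1) * a (k + 2) * (a (k + 1) * a (k + 2)) := by ring

-- Multiplying the generating polynomial by `x + c`; the cross term `c * a k * a (k + 3)` is where
-- the absence of internal zeros is needed.
theorem mul_succ_add (ha : LogConcave a) (hz : NoInternalZeros a) (c : ℕ) :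
    LogConcave fun k => c * a (k + 1) + a k := by
  intro k
  have h₀ := ha k
  have h₁ := ha (k + 1)
  have h₂ := ha.mul_le_mul_of_noInternalZeros hz k
  dsimp only
  nlinarith [Nat.mul_le_mul_left c h₂, Nat.mul_le_mul_left (c * c) h₁]

end LogConcave

namespace Nat

theorem stirlingFirst_pos {n k : ℕ} (hk : 1 ≤ k) (hkn : k ≤ n) : 0 < stirlingFirst n k := by
  induction n generalizing k with
  | zero => omega
  | succ n ih =>
    obtain ⟨j, rfl⟩ := Nat.exists_eq_add_of_le' hk
    rcases Nat.eq_zero_or_pos j with rfl | hj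
    · rw [stirlingFirst_one_right]
      exact factorial_pos n
    · rw [stirlingFirst_succ_succ]
      exact Nat.add_pos_right _ (ih hj (by omega))

theorem noInternalZeros_stirlingFirst (n : ℕ) : NoInternalZeros (stirlingFirst n) := by
  intro i j l hij hjl hi hl
  have hln : l ≤ n := by
    by_contra! h
    exact hl (stirlingFirst_eq_zero_of_lt h)
  rcases Nat.eq_zero_or_pos j with rfl | hj
  · obtain rfl : i = 0 := by omega
    exact hi
  · exact (stirlingFirst_pos hj (by omega)).ne'

theorem logConcave_stirlingFirst (n : ℕ) : LogConcave (stirlingFirst n) := by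
  induction n with
  | zero => intro k; simp [stirlingFirst_eq_zero_of_lt (by omega : 0 < k + 2)]
  | succ n ih =>
    rintro (_ | k)
    · simp
    · simpa only [stirlingFirst_succ_succ] using
        ih.mul_succ_add (noInternalZeros_stirlingFirst n) n k

end Nat

theorem stirlingFirst_log_concave_general (n k : ℕ) (hk : 1 ≤ k) :
    stirlingFirst n (k - 1) * stirlingFirst n (k + 1) ≤ stirlingFirst n k ^ 2 := by
  obtain ⟨j, rfl⟩ := Nat.exists_eq_add_of_le' hk
  simpa only [stirlingFirst_eq_nat_stirlingFirst, Nat.add_sub_cancel] using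
    Nat.logConcave_stirlingFirst n j

/-- The unsigned Stirling numbers of the first kind are log-concave in `k`:
for `n ≥ 1` and `1 ≤ k ≤ n - 1`, `s(n,k-1) · s(n,k+1) ≤ s(n,k)²`. -/
theorem stirlingFirst_log_concave (n k : ℕ) (hn : 1 ≤ n) (hk : 1 ≤ k)
    (hk' : k ≤ n - 1) :
    stirlingFirst n (k - 1) * stirlingFirst n (k + 1) ≤ stirlingFirst n k ^ 2 :=
  stirlingFirst_log_concave_general n k hk
end

section
/- The symmetric group S_n under absolute order satisfies the normalized matching condition upward between every pair of consecutive levels: for every r with 0 ≤ r ≤ n − 2 and every subset X of the level L_r = {σ ∈ S_n : ℓ_T(σ) = r}, letting D(X) = {π ∈ L_{r+1} : there exists σ ∈ X with σ ≤_T π}, one has |X| · |L_{r+1}| ≤ |D(X)| · |L_r|. -/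
open Equiv Equiv.Perm Finset

variable {α : Type*} [DecidableEq α] [Fintype α]

/-- Extending a cycle by a fixed point: `swap x y * c` is a cycle when `c` is a
cycle fixing `x` and moving `y`. -/
lemma isCycle_swap_mul_cycle {c : Perm α} (hc : c.IsCycle)
    {x y : α} (hx : c x = x) (hy : c y ≠ y) :
    (swap x y * c).IsCycle ∧ (swap x y * c).support = insert x c.support := by
  have hxy : x ≠ y := by rintro rfl; exact hy hx
  set d := swap x y * c with hd
  have hcx : ∀ a, c a = x → a = x := fun a ha => c.injective (ha.trans hx.symm)
  have hdx : d x = y := by simp [hd, hx]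
  have hswap : ∀ a, a ≠ x → a ≠ y → swap x y a = a := fun a h1 h2 =>
    swap_apply_of_ne_of_ne h1 h2
  have hdmove : ∀ a, c a ≠ a → d a ≠ a := by
    intro a ha
    have hax : a ≠ x := by rintro rfl; exact ha hx
    have hcax : c a ≠ x := fun h => hax (hcx a h)
    by_cases hcay : c a = y
    · simp only [hd, Perm.mul_apply, hcay, swap_apply_right]
      exact hax.symm
    · simpa [hd, Perm.mul_apply, hswap _ hcax hcay] using ha
  have hsupp : d.support = insert x c.support := by
    ext a
    simp only [mem_support, mem_insert]
    constructor
    · intro hda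
      by_cases hax : a = x
      · exact Or.inl hax
      · refine Or.inr fun hca => ?_
        have hay : a ≠ y := by rintro rfl; exact hy hca
        exact hda (by simp [hd, Perm.mul_apply, hca, hswap a hax hay])
    · rintro (rfl | hca)
      · rw [hdx]; exact hxy.symm
      · exact hdmove a hca
  refine ⟨⟨x, by rw [hdx]; exact hxy.symm, ?_⟩, hsupp⟩
  intro b hb
  -- b is moved by d
  have hyx : ∀ j : ℕ, (c ^ j) x = x := by
    intro j; induction j with
    | zero => rfl
    | succ j ih => rw [pow_succ, Perm.mul_apply, hx, ih]
  have key : ∀ k, k < orderOf c → (d ^ (k + 1)) x = (c ^ k) y := by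
    intro k
    induction k with
    | zero => intro _; simpa using hdx
    | succ k ih =>
      intro hk
      have ih' := ih (Nat.lt_of_succ_lt hk)
      have h1 : (c ^ (k + 1)) y ≠ y := by
        intro h
        have : c ^ (k + 1) = 1 := (hc.pow_eq_one_iff' hy).2 h
        have := orderOf_dvd_of_pow_eq_one this
        exact absurd (Nat.le_of_dvd (Nat.succ_pos k) this) (not_le.2 hk)
      have h2 : (c ^ (k + 1)) y ≠ x := by
        intro h
        have := (c ^ (k + 1)).injective (h.trans (hyx (k + 1)).symm)
        exact hxy this.symm
      rw [pow_succ', Perm.mul_apply, ih']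
      show swap x y (c ((c ^ k) y)) = _
      rw [← Perm.mul_apply c, ← pow_succ']
      exact hswap _ h2 h1
  rcases eq_or_ne b x with rfl | hbx
  · exact SameCycle.refl _ _
  have hcb : c b ≠ b := by
    have hb' : b ∈ insert x c.support := by rw [← hsupp]; exact mem_support.2 hb
    rcases mem_insert.1 hb' with rfl | h
    · exact absurd rfl hbx
    · exact mem_support.1 h
  obtain ⟨i, hi, hiy⟩ := (hc.sameCycle hy hcb).exists_pow_eq'
  exact ⟨((i + 1 : ℕ) : ℤ), by rw [zpow_natCast, key i hi, hiy]⟩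

/-- Fixed points of `swap x y * τ` when `τ x = x`. -/
lemma fix_swap_mul {τ : Perm α} {x y : α} (hx : τ x = x) (hxy : x ≠ y) :
    univ.filter (fun a => (swap x y * τ) a = a) =
      ((univ.filter fun a => τ a = a).erase y).erase x := by
  ext a
  simp only [mem_filter, mem_univ, true_and, mem_erase]
  simp only [Perm.mul_apply]
  constructor
  · intro h
    rcases eq_or_ne a x with rfl | hax
    · rw [hx, swap_apply_left] at h; exact absurd h.symm hxy
    rcases eq_or_ne a y with rfl | hay
    · have hτy : τ a ≠ x := fun hh => hxy (τ.injective (hx.trans hh.symm))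
      rcases eq_or_ne (τ a) a with h2 | h2
      · rw [h2, swap_apply_right] at h; exact absurd h hxy
      · rw [swap_apply_of_ne_of_ne hτy h2] at h; exact absurd h h2
    · refine ⟨hax, hay, ?_⟩
      have h2 : swap x y (swap x y (τ a)) = swap x y a := by rw [h]
      rw [swap_apply_self, swap_apply_of_ne_of_ne hax hay] at h2
      exact h2
  · rintro ⟨hax, hay, h⟩
    rw [h, swap_apply_of_ne_of_ne hax hay]

lemma cycleType_card_swap_mul {τ : Perm α} {x y : α} (hx : τ x = x) (hxy : x ≠ y) :
    Multiset.card (swap x y * τ).cycleType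
      = Multiset.card τ.cycleType + (if τ y = y then 1 else 0) := by
  by_cases hy : τ y = y
  · -- disjoint case
    have hdisj : Disjoint (swap x y) τ := by
      intro a
      rcases eq_or_ne a x with rfl | hax
      · exact Or.inr hx
      rcases eq_or_ne a y with rfl | hay
      · exact Or.inr hy
      · exact Or.inl (swap_apply_of_ne_of_ne hax hay)
    rw [hdisj.cycleType_mul, (isCycle_swap hxy).cycleType, hy, if_pos rfl]
    simp [add_comm]
  · -- merge case
    set c := τ.cycleOf y with hc
    have hmem : c ∈ τ.cycleFactorsFinset := (cycleOf_mem_cycleFactorsFinset_iff).2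
      (mem_support.2 hy)
    have hccy : c y = τ y := cycleOf_apply_self τ y
    have hcyc : c.IsCycle := isCycle_cycleOf τ hy
    have hsuppc : c.support ⊆ τ.support := support_cycleOf_le τ y
    have hxs : x ∉ τ.support := by simp [mem_support, hx]
    have hcx : c x = x := by
      by_contra h
      exact hxs (hsuppc (mem_support.2 h))
    set g := τ * c⁻¹ with hg
    have hdgc : Disjoint g c := disjoint_mul_inv_of_mem_cycleFactorsFinset hmem
    have hgc : g * c = τ := by rw [hg, inv_mul_cancel_right]
    have hgx : g x = x := by
      rw [hg, Perm.mul_apply]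
      have : c⁻¹ x = x := (Perm.inv_eq_iff_eq).2 hcx.symm
      rw [this, hx]
    have hgy : g y = y := by
      rcases hdgc y with h | h
      · exact h
      · rw [hccy] at h; exact absurd h hy
    have hdsw : Disjoint (swap x y) g := by
      intro a
      rcases eq_or_ne a x with rfl | hax
      · exact Or.inr hgx
      rcases eq_or_ne a y with rfl | hay
      · exact Or.inr hgy
      · exact Or.inl (swap_apply_of_ne_of_ne hax hay)
    obtain ⟨hdcyc, hdsupp⟩ := isCycle_swap_mul_cycle hcyc hcx (by rw [hccy]; exact hy)
    have hfact : swap x y * τ = g * (swap x y * c) := by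
      rw [← hgc, ← mul_assoc, (hdsw.commute).eq, mul_assoc]
    have hdisj2 : Disjoint g (swap x y * c) := by
      intro a
      by_cases hga : g a = a
      · exact Or.inl hga
      · refine Or.inr ?_
        have hax : a ≠ x := fun h => hga (h ▸ hgx)
        have hay : a ≠ y := fun h => hga (h ▸ hgy)
        have hca : c a = a := (hdgc a).resolve_left hga
        rw [Perm.mul_apply, hca, swap_apply_of_ne_of_ne hax hay]
    rw [hfact, hdisj2.cycleType_mul, hdcyc.cycleType]
    have hτct : τ.cycleType = g.cycleType + c.cycleType := by
      have := cycleType_mul_inv_mem_cycleFactorsFinset_eq_sub (f := c) (g := τ) hmem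
      rw [← hg] at this
      have hle : c.cycleType ≤ τ.cycleType := cycleType_le_of_mem_cycleFactorsFinset hmem
      rw [this, tsub_add_cancel_of_le hle]
    rw [hτct, hcyc.cycleType, if_neg hy]
    simp

/-- The merge lemma: multiplying by a transposition joining a fixed point `x`
to any other point decreases the cycle count (incl. fixed points) by one. -/
lemma cycleCount_swap_mul {τ : Perm α} {x y : α} (hx : τ x = x) (hxy : x ≠ y) :
    Multiset.card (swap x y * τ).cycleType
        + (univ.filter fun a => (swap x y * τ) a = a).card + 1
      = Multiset.card τ.cycleType + (univ.filter fun a => τ a = a).card := by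
  have hfix := fix_swap_mul hx hxy
  have hx' : x ∈ (univ.filter fun a => τ a = a) := by simp [hx]
  rw [cycleType_card_swap_mul hx hxy, hfix]
  by_cases hy : τ y = y
  · have hy' : y ∈ (univ.filter fun a => τ a = a) := by simp [hy]
    have hx'' : x ∈ (univ.filter fun a => τ a = a).erase y := mem_erase.2 ⟨hxy, hx'⟩
    rw [card_erase_of_mem hx'', card_erase_of_mem hy', if_pos hy]
    have h2 : 1 < (univ.filter fun a => τ a = a).card :=
      Finset.one_lt_card.2 ⟨x, hx', y, hy', hxy⟩
    omega
  · have hy' : y ∉ (univ.filter fun a => τ a = a) := by simp [hy]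
    have he : (univ.filter fun a => τ a = a).erase y = univ.filter fun a => τ a = a :=
      erase_eq_of_notMem hy'
    rw [he, card_erase_of_mem hx', if_neg hy]
    have h1 : 1 ≤ (univ.filter fun a => τ a = a).card := card_pos.2 ⟨x, hx'⟩
    omega

/-- The absolute length `ℓ_T(π) = n - c(π)`. -/
def absLength {n : ℕ} (π : Equiv.Perm (Fin n)) : ℕ :=
  n - cycleCount π

/-- The absolute order on `S_n`: `σ ≤_T π` iff `ℓ_T(π) = ℓ_T(σ) + ℓ_T(σ⁻¹ π)`. -/
def absLe {n : ℕ} (σ π : Equiv.Perm (Fin n)) : Prop :=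
  absLength π = absLength σ + absLength (σ⁻¹ * π)

instance {n : ℕ} (σ π : Equiv.Perm (Fin n)) : Decidable (absLe σ π) :=
  inferInstanceAs (Decidable (_ = _))

/-- The level `L_r` of `S_n`: all permutations of absolute length `r`. -/
def absLevel (n r : ℕ) : Finset (Equiv.Perm (Fin n)) :=
  Finset.univ.filter fun π => absLength π = r

section Hat

variable {n : ℕ}

/-- `Fin n` is equivalent to the nonzero elements of `Fin (n+1)`. -/
def succEquiv (n : ℕ) : Fin n ≃ {x : Fin (n + 1) // x ≠ 0} where
  toFun i := ⟨i.succ, Fin.succ_ne_zero i⟩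
  invFun x := (x.1).pred x.2
  left_inv i := by simp
  right_inv x := by cases x with | mk v hv => simp [Fin.succ_pred]

/-- The embedding of `Perm (Fin n)` into `Perm (Fin (n+1))` fixing `0`. -/
def hat (σ : Equiv.Perm (Fin n)) : Equiv.Perm (Fin (n + 1)) :=
  Equiv.Perm.decomposeFin.symm (0, σ)

lemma hat_eq_extendDomain (σ : Equiv.Perm (Fin n)) :
    hat σ = σ.extendDomain (succEquiv n) := by
  ext a
  refine Fin.cases ?_ (fun i => ?_) a
  · rw [hat, Equiv.Perm.decomposeFin_symm_apply_zero,
      Equiv.Perm.extendDomain_apply_not_subtype]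
    simp
  · rw [hat, Equiv.Perm.decomposeFin_symm_apply_succ,
      Equiv.Perm.extendDomain_apply_subtype (b := i.succ) _ _ (Fin.succ_ne_zero i)]
    simp [succEquiv]

lemma cycleType_hat (σ : Equiv.Perm (Fin n)) : (hat σ).cycleType = σ.cycleType := by
  rw [hat_eq_extendDomain]; exact Equiv.Perm.cycleType_extendDomain _

lemma hat_apply_zero (σ : Equiv.Perm (Fin n)) : hat σ 0 = 0 :=
  Equiv.Perm.decomposeFin_symm_apply_zero 0 σ

lemma hat_apply_succ (σ : Equiv.Perm (Fin n)) (i : Fin n) : hat σ i.succ = (σ i).succ := by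
  rw [hat, Equiv.Perm.decomposeFin_symm_apply_succ]
  simp

lemma fix_hat (σ : Equiv.Perm (Fin n)) :
    (Finset.univ.filter fun a => hat σ a = a).card
      = (Finset.univ.filter fun a => σ a = a).card + 1 := by
  have h : (Finset.univ.filter fun a => hat σ a = a)
      = insert (0 : Fin (n + 1)) ((Finset.univ.filter fun a => σ a = a).image Fin.succ) := by
    ext a
    refine Fin.cases ?_ (fun i => ?_) a
    · simp [hat_apply_zero]
    · simp only [mem_filter, mem_univ, true_and, mem_insert, mem_image, hat_apply_succ]
      constructor
      · intro h
        exact Or.inr ⟨i, Fin.succ_injective n h, rfl⟩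
      · rintro (h | ⟨j, hj, hji⟩)
        · exact absurd h (Fin.succ_ne_zero i)
        · have : j = i := Fin.succ_injective n hji
          subst this
          rw [hj]
  rw [h, card_insert_of_notMem (by simp [eq_comm, Fin.succ_ne_zero]),
    Finset.card_image_of_injective _ (Fin.succ_injective n), add_comm]

lemma cycleCount_hat (σ : Equiv.Perm (Fin n)) : cycleCount (hat σ) = cycleCount σ + 1 := by
  rw [cycleCount, cycleCount, cycleType_hat, fix_hat]
  ring

lemma cycleCount_le (π : Equiv.Perm (Fin n)) : cycleCount π ≤ n := by
  have h1 : π.cycleType.sum = π.support.card := Equiv.Perm.sum_cycleType π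
  have h2 : Multiset.card π.cycleType * 2 ≤ π.cycleType.sum := by
    have := Multiset.card_nsmul_le_sum (s := π.cycleType) (a := 2)
      (fun x hx => Equiv.Perm.two_le_of_mem_cycleType hx)
    simpa [smul_eq_mul, mul_comm] using this
  have h3 : (Finset.univ.filter fun x => π x = x).card + π.support.card = n := by
    have := Finset.card_filter_add_card_filter_not
      (s := (Finset.univ : Finset (Fin n))) (p := fun x => π x = x)
    rw [Finset.card_univ, Fintype.card_fin] at this
    have hs : π.support = Finset.univ.filter fun a => ¬ π a = a := by
      ext a; simp [Equiv.Perm.mem_support]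
    rw [hs]
    exact this
  rw [cycleCount]
  omega

lemma absLength_hat (σ : Equiv.Perm (Fin n)) : absLength (hat σ) = absLength σ := by
  rw [absLength, absLength, cycleCount_hat, Nat.succ_sub_succ]

end Hat

section Rank

variable {n : ℕ}

lemma decompose_eq_swap_mul (p : Fin (n + 1)) (σ : Equiv.Perm (Fin n)) :
    Equiv.Perm.decomposeFin.symm (p, σ) = swap 0 p * hat σ := by
  ext a
  refine Fin.cases ?_ (fun i => ?_) a
  · rw [Equiv.Perm.decomposeFin_symm_apply_zero]
    simp [hat_apply_zero]
  · rw [Equiv.Perm.decomposeFin_symm_apply_succ]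
    simp [hat_apply_succ]

lemma absLength_swap {m : ℕ} {u v : Fin m} (huv : u ≠ v) : absLength (swap u v) = 1 := by
  have hsupp : (swap u v).support = {u, v} := Equiv.Perm.support_swap huv
  have hct : (swap u v).cycleType = {2} := by
    rw [(isCycle_swap huv).cycleType, hsupp]
    simp [card_insert_of_notMem, huv]
  have hfix : (Finset.univ.filter fun a => (swap u v) a = a).card + 2 = m := by
    have h3 := Finset.card_filter_add_card_filter_not
      (s := (Finset.univ : Finset (Fin m))) (p := fun x => (swap u v) x = x)
    rw [Finset.card_univ, Fintype.card_fin] at h3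
    have hs : (swap u v).support = Finset.univ.filter fun a => ¬ (swap u v) a = a := by
      ext a; simp [Equiv.Perm.mem_support]
    have h4 : (Finset.univ.filter fun a => ¬ (swap u v) a = a).card = 2 := by
      rw [← hs, hsupp]
      simp [card_insert_of_notMem, huv]
    omega
  have hm : 2 ≤ m := by
    have : ({u, v} : Finset (Fin m)).card = 2 := by simp [card_insert_of_notMem, huv]
    calc 2 = ({u, v} : Finset (Fin m)).card := this.symm
    _ ≤ (Finset.univ : Finset (Fin m)).card := card_le_card (subset_univ _)
    _ = m := by simp
  rw [absLength, cycleCount, hct]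
  simp only [Multiset.card_singleton]
  omega

lemma cycleCount_le_n {m : ℕ} (π : Equiv.Perm (Fin m)) : cycleCount π ≤ m := cycleCount_le π

lemma absLength_decompose (p : Fin (n + 1)) (σ : Equiv.Perm (Fin n)) :
    absLength (Equiv.Perm.decomposeFin.symm (p, σ))
      = absLength σ + if p = 0 then 0 else 1 := by
  rcases eq_or_ne p 0 with rfl | hp
  · rw [if_pos rfl]
    exact absLength_hat σ
  · rw [if_neg hp, decompose_eq_swap_mul]
    have hkey := cycleCount_swap_mul (τ := hat σ) (x := (0 : Fin (n+1))) (y := p)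
      (hat_apply_zero σ) (Ne.symm hp)
    have hcc : cycleCount (swap 0 p * hat σ) + 1 = cycleCount (hat σ) := hkey
    have hhat : cycleCount (hat σ) = cycleCount σ + 1 := cycleCount_hat σ
    have hle : cycleCount σ ≤ n := cycleCount_le σ
    rw [absLength, absLength]
    omega

end Rank

section Edges

variable {n : ℕ}

lemma hat_mul (σ τ : Equiv.Perm (Fin n)) : hat (σ * τ) = hat σ * hat τ := by
  rw [hat_eq_extendDomain, hat_eq_extendDomain, hat_eq_extendDomain,
    Equiv.Perm.extendDomain_mul]

lemma hat_inv (σ : Equiv.Perm (Fin n)) : (hat σ)⁻¹ = hat σ⁻¹ := by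
  rw [hat_eq_extendDomain, hat_eq_extendDomain, Equiv.Perm.extendDomain_inv]

lemma absLe_hat {a b : Equiv.Perm (Fin n)} (hab : absLe a b) : absLe (hat a) (hat b) := by
  rw [absLe, absLength_hat, absLength_hat, hat_inv, ← hat_mul, absLength_hat]
  exact hab

lemma absLe_phi {a b : Equiv.Perm (Fin n)} (p : Fin (n + 1)) (hab : absLe a b) :
    absLe (swap 0 p * hat a) (swap 0 p * hat b) := by
  rw [absLe, ← decompose_eq_swap_mul, ← decompose_eq_swap_mul,
    absLength_decompose, absLength_decompose]
  have hq : (swap 0 p * hat a)⁻¹ * (swap 0 p * hat b) = hat (a⁻¹ * b) := by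
    rw [mul_inv_rev, hat_inv, mul_assoc, ← mul_assoc (swap 0 p)⁻¹, inv_mul_cancel,
      one_mul, hat_mul]
  have hq' : (Equiv.Perm.decomposeFin.symm (p, a))⁻¹ * Equiv.Perm.decomposeFin.symm (p, b)
      = hat (a⁻¹ * b) := by
    rw [decompose_eq_swap_mul, decompose_eq_swap_mul]; exact hq
  rw [hq', absLength_hat]
  rw [absLe] at hab
  omega

lemma absLe_edge_y {a : Equiv.Perm (Fin n)} {q : Fin (n + 1)} (hq : q ≠ 0) :
    absLe (hat a) (swap 0 q * hat a) := by
  rw [absLe]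
  have h1 : absLength (swap 0 q * hat a) = absLength a + 1 := by
    rw [← decompose_eq_swap_mul, absLength_decompose, if_neg hq]
  have h2 : (hat a)⁻¹ * (swap 0 q * hat a) = swap ((hat a)⁻¹ 0) ((hat a)⁻¹ q) := by
    have := swap_apply_apply (hat a)⁻¹ (0 : Fin (n + 1)) q
    rw [this]
    group
  have h3 : absLength ((hat a)⁻¹ * (swap 0 q * hat a)) = 1 := by
    rw [h2]
    exact absLength_swap (fun h => hq ((hat a)⁻¹.injective h).symm)
  rw [h1, h3, absLength_hat]

end Edges

section Levels

lemma card_level_eq (n s : ℕ) :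
    (absLevel (n + 1) s).card
      = ((Finset.univ : Finset (Fin (n + 1) × Equiv.Perm (Fin n))).filter
          (fun q => absLength q.2 + (if q.1 = 0 then 0 else 1) = s)).card := by
  apply Finset.card_bij' (fun π _ => Equiv.Perm.decomposeFin π)
    (fun q _ => Equiv.Perm.decomposeFin.symm q)
  · intro π hπ
    simp only [absLevel, mem_filter, mem_univ, true_and] at hπ ⊢
    have := absLength_decompose (Equiv.Perm.decomposeFin π).1 (Equiv.Perm.decomposeFin π).2
    rw [← this]
    rw [Prod.mk.eta, Equiv.symm_apply_apply]
    exact hπ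
  · intro q hq
    simp only [absLevel, mem_filter, mem_univ, true_and] at hq ⊢
    have := absLength_decompose q.1 q.2
    rw [Prod.mk.eta] at this
    rw [this]
    exact hq
  · intro π _; exact Equiv.symm_apply_apply _ _
  · intro q _; exact Equiv.apply_symm_apply _ _

lemma level_rec_zero (n : ℕ) : (absLevel (n + 1) 0).card = (absLevel n 0).card := by
  rw [card_level_eq, Finset.card_filter, Fintype.sum_prod_type, Fin.sum_univ_succ]
  have h1 : ∀ σ : Equiv.Perm (Fin n),
      (if absLength σ + (if (0 : Fin (n+1)) = 0 then 0 else 1) = 0 then 1 else 0)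
        = if absLength σ = 0 then 1 else 0 := by
    intro σ; simp
  have h2 : ∀ (i : Fin n) (σ : Equiv.Perm (Fin n)),
      (if absLength σ + (if (Fin.succ i : Fin (n+1)) = 0 then 0 else 1) = 0 then 1 else 0) = 0 := by
    intro i σ; simp [Fin.succ_ne_zero]
  simp only [h1, h2, Finset.sum_const_zero, add_zero]
  rw [← Finset.card_filter]
  rfl

lemma level_rec_succ (n r : ℕ) :
    (absLevel (n + 1) (r + 1)).card
      = (absLevel n (r + 1)).card + n * (absLevel n r).card := by
  rw [card_level_eq, Finset.card_filter, Fintype.sum_prod_type, Fin.sum_univ_succ]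
  have h1 : ∀ σ : Equiv.Perm (Fin n),
      (if absLength σ + (if (0 : Fin (n+1)) = 0 then 0 else 1) = r + 1 then 1 else 0)
        = if absLength σ = r + 1 then (1:ℕ) else 0 := by
    intro σ; simp
  have h2 : ∀ (i : Fin n) (σ : Equiv.Perm (Fin n)),
      (if absLength σ + (if (Fin.succ i : Fin (n+1)) = 0 then 0 else 1) = r + 1 then 1 else 0)
        = if absLength σ = r then (1:ℕ) else 0 := by
    intro i σ
    simp only [Fin.succ_ne_zero, if_false]
    have h : (absLength σ + 1 = r + 1) ↔ (absLength σ = r) := by omega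
    simp [h]
  simp only [h1, h2]
  rw [← Finset.card_filter]
  have h3 : ∀ i : Fin n, ∑ σ : Equiv.Perm (Fin n), (if absLength σ = r then (1:ℕ) else 0)
      = (absLevel n r).card := by
    intro i; rw [← Finset.card_filter]; rfl
  rw [Finset.sum_congr rfl (fun i _ => h3 i), Finset.sum_const, Finset.card_univ,
    Fintype.card_fin, smul_eq_mul]
  rfl

end Levels

section Flow

open Equiv Equiv.Perm

/-- Level sizes. -/
def levN (n r : ℕ) : ℕ := (absLevel n r).card

/-- A normalized flow between levels `r` and `r+1` of the absolute order. -/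
def IsFlow (n r : ℕ) (F : Equiv.Perm (Fin n) → Equiv.Perm (Fin n) → ℚ) : Prop :=
  (∀ σ π, F σ π ≠ 0 → absLength σ = r ∧ absLength π = r + 1 ∧ absLe σ π) ∧
  (∀ σ π, 0 ≤ F σ π) ∧
  (∀ σ, absLength σ = r → ∑ π, F σ π = 1 / (levN n r : ℚ)) ∧
  (∀ π, absLength π = r + 1 → ∑ σ, F σ π = 1 / (levN n (r + 1) : ℚ))

lemma flow_nm {n r : ℕ} {F : Equiv.Perm (Fin n) → Equiv.Perm (Fin n) → ℚ}
    (hF : IsFlow n r F) (hNr : levN n r ≠ 0) (hNr1 : levN n (r + 1) ≠ 0)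
    (X : Finset (Equiv.Perm (Fin n))) (hX : X ⊆ absLevel n r) :
    X.card * (absLevel n (r + 1)).card ≤
      ((absLevel n (r + 1)).filter fun π => ∃ σ ∈ X, absLe σ π).card *
        (absLevel n r).card := by
  obtain ⟨hsupp, hnn, hout, hin⟩ := hF
  set D := (absLevel n (r + 1)).filter fun π => ∃ σ ∈ X, absLe σ π with hD
  have hrank : ∀ σ ∈ X, absLength σ = r := by
    intro σ hσ
    have := hX hσ
    simpa [absLevel] using this
  have h1 : ∑ σ ∈ X, ∑ π, F σ π = (X.card : ℚ) / (levN n r : ℚ) := by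
    rw [Finset.sum_congr rfl (fun σ hσ => hout σ (hrank σ hσ)), Finset.sum_const,
      nsmul_eq_mul]
    ring
  have h2 : ∀ σ ∈ X, ∑ π, F σ π = ∑ π ∈ D, F σ π := by
    intro σ hσ
    refine (Finset.sum_subset (Finset.subset_univ D) ?_).symm
    intro π _ hπD
    by_contra h
    obtain ⟨_, hπr, hle⟩ := hsupp σ π h
    exact hπD (Finset.mem_filter.2 ⟨by simpa [absLevel] using hπr, σ, hσ, hle⟩)
  have h3 : ∑ σ ∈ X, ∑ π ∈ D, F σ π ≤ ∑ σ, ∑ π ∈ D, F σ π :=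
    Finset.sum_le_sum_of_subset_of_nonneg (Finset.subset_univ X)
      (fun σ _ _ => Finset.sum_nonneg fun π _ => hnn σ π)
  have h4 : ∑ σ, ∑ π ∈ D, F σ π = (D.card : ℚ) / (levN n (r + 1) : ℚ) := by
    rw [Finset.sum_comm]
    rw [Finset.sum_congr rfl (fun π hπ => hin π (by
      have := Finset.mem_filter.1 hπ
      have := Finset.mem_filter.1 this.1
      exact this.2))]
    rw [Finset.sum_const, nsmul_eq_mul]
    ring
  have hmain : (X.card : ℚ) / (levN n r : ℚ) ≤ (D.card : ℚ) / (levN n (r + 1) : ℚ) := by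
    calc (X.card : ℚ) / (levN n r : ℚ) = ∑ σ ∈ X, ∑ π, F σ π := h1.symm
    _ = ∑ σ ∈ X, ∑ π ∈ D, F σ π := Finset.sum_congr rfl h2
    _ ≤ ∑ σ, ∑ π ∈ D, F σ π := h3
    _ = (D.card : ℚ) / (levN n (r + 1) : ℚ) := h4
  have hNrpos : (0 : ℚ) < (levN n r : ℚ) := by exact_mod_cast Nat.pos_of_ne_zero hNr
  have hNr1pos : (0 : ℚ) < (levN n (r + 1) : ℚ) := by exact_mod_cast Nat.pos_of_ne_zero hNr1
  rw [div_le_div_iff₀ hNrpos hNr1pos] at hmain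
  have hq : ((X.card * levN n (r + 1) : ℕ) : ℚ) ≤ ((D.card * levN n r : ℕ) : ℚ) := by
    push_cast
    exact hmain
  exact_mod_cast hq

end Flow

section Step

open Equiv Equiv.Perm

/-- `levN n (r-1)` with the convention that it is `0` for `r = 0`. -/
def Npred (n r : ℕ) : ℕ := match r with
  | 0 => 0
  | s + 1 => levN n s

lemma levN_rec (n r : ℕ) : levN (n + 1) r = levN n r + n * Npred n r := by
  cases r with
  | zero => simpa [Npred, levN] using level_rec_zero n
  | succ s => simpa [Npred, levN] using level_rec_succ n s

lemma rank_decomposed {n : ℕ} (π : Equiv.Perm (Fin (n + 1))) :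
    absLength π = absLength (Equiv.Perm.decomposeFin π).2
      + if (Equiv.Perm.decomposeFin π).1 = 0 then 0 else 1 := by
  have h := absLength_decompose (Equiv.Perm.decomposeFin π).1 (Equiv.Perm.decomposeFin π).2
  rw [Prod.mk.eta, Equiv.symm_apply_apply] at h
  exact h

lemma phi_decomposed {n : ℕ} (π : Equiv.Perm (Fin (n + 1))) :
    π = swap 0 (Equiv.Perm.decomposeFin π).1 * hat (Equiv.Perm.decomposeFin π).2 := by
  rw [← decompose_eq_swap_mul, Prod.mk.eta, Equiv.symm_apply_apply]

lemma hat_decomposed {n : ℕ} (π : Equiv.Perm (Fin (n + 1)))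
    (h : (Equiv.Perm.decomposeFin π).1 = 0) :
    π = hat (Equiv.Perm.decomposeFin π).2 := by
  have := phi_decomposed π
  rwa [h, swap_self, ← Equiv.Perm.one_def, one_mul] at this

lemma step_flow (n r : ℕ)
    (zp : ∀ t, levN n (t + 1) ≠ 0 → levN n t ≠ 0)
    (lc : ∀ t, levN n t * levN n (t + 2) ≤ levN n (t + 1) * levN n (t + 1))
    (flows : ∀ t, levN n t ≠ 0 → levN n (t + 1) ≠ 0 → ∃ F, IsFlow n t F)
    (hMr : levN (n + 1) r ≠ 0) (hMr1 : levN (n + 1) (r + 1) ≠ 0) :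
    ∃ F, IsFlow (n + 1) r F := by
  classical
  -- basic notation
  have hrec1 : levN (n + 1) (r + 1) = levN n (r + 1) + n * levN n r := by
    simpa [Npred] using levN_rec n (r + 1)
  have hrec0 : levN (n + 1) r = levN n r + n * Npred n r := levN_rec n r
  have hNr : levN n r ≠ 0 := by
    intro h0
    have h1 : levN n (r + 1) = 0 := by
      by_contra h1
      exact (zp r h1) h0
    rw [hrec1, h1, h0] at hMr1
    simp at hMr1
  -- the lower auxiliary flow (levels r-1 → r of S_n); trivial when r = 0
  obtain ⟨F0, hF0supp, hF0nn, hF0out, hF0in⟩ :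
      ∃ F0 : Equiv.Perm (Fin n) → Equiv.Perm (Fin n) → ℚ,
        (∀ a b, F0 a b ≠ 0 → absLength a + 1 = r ∧ absLength b = r ∧ absLe a b) ∧
        (∀ a b, 0 ≤ F0 a b) ∧
        (∀ a, absLength a + 1 = r → ∑ b, F0 a b = 1 / (Npred n r : ℚ)) ∧
        (∀ b, absLength b = r →
          (Npred n r : ℚ) * ∑ a, F0 a b = (Npred n r : ℚ) / (levN n r : ℚ)) := by
    cases r with
    | zero =>
      refine ⟨0, ?_, ?_, ?_, ?_⟩
      · intro a b h; simp at h
      · intro a b; simp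
      · intro a h; omega
      · intro b _; simp [Npred]
    | succ s =>
      have hNs : levN n s ≠ 0 := zp s hNr
      obtain ⟨F0, h1, h2, h3, h4⟩ := flows s hNs hNr
      refine ⟨F0, ?_, h2, ?_, ?_⟩
      · intro a b h
        obtain ⟨ha, hb, hab⟩ := h1 a b h
        exact ⟨by omega, hb, hab⟩
      · intro a ha
        have ha' : absLength a = s := by omega
        rw [h3 a ha']
        rfl
      · intro b hb
        rw [h4 b hb]
        show (levN n s : ℚ) * (1 / (levN n (s + 1) : ℚ))
          = (levN n s : ℚ) / (levN n (s + 1) : ℚ)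
        ring
  -- the upper auxiliary flow (levels r → r+1 of S_n); trivial when level r+1 is empty
  obtain ⟨F1, hF1supp, hF1nn, hF1out, hF1in⟩ :
      ∃ F1 : Equiv.Perm (Fin n) → Equiv.Perm (Fin n) → ℚ,
        (∀ a b, F1 a b ≠ 0 → absLength a = r ∧ absLength b = r + 1 ∧ absLe a b) ∧
        (∀ a b, 0 ≤ F1 a b) ∧
        (∀ a, absLength a = r →
          (levN n (r + 1) : ℚ) * ∑ b, F1 a b = (levN n (r + 1) : ℚ) / (levN n r : ℚ)) ∧
        (∀ b, absLength b = r + 1 → ∑ a, F1 a b = 1 / (levN n (r + 1) : ℚ)) := by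
    by_cases hNr1 : levN n (r + 1) = 0
    · refine ⟨0, ?_, ?_, ?_, ?_⟩
      · intro a b h; simp at h
      · intro a b; simp
      · intro a _; rw [hNr1]; simp
      · intro b hb
        exfalso
        have hmem : b ∈ absLevel n (r + 1) := by simp [absLevel, hb]
        exact Finset.card_ne_zero_of_mem hmem hNr1
    · obtain ⟨F1, h1, h2, h3, h4⟩ := flows r hNr hNr1
      refine ⟨F1, h1, h2, ?_, h4⟩
      intro a ha
      rw [h3 a ha]
      ring
  -- constants
  have hMrQ : (levN (n + 1) r : ℚ) ≠ 0 := Nat.cast_ne_zero.2 hMr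
  have hMr1Q : (levN (n + 1) (r + 1) : ℚ) ≠ 0 := Nat.cast_ne_zero.2 hMr1
  have hNrQ : (levN n r : ℚ) ≠ 0 := Nat.cast_ne_zero.2 hNr
  have hMrpos : (0:ℚ) < (levN (n + 1) r : ℚ) := by
    exact_mod_cast Nat.pos_of_ne_zero hMr
  have hMr1pos : (0:ℚ) < (levN (n + 1) (r + 1) : ℚ) := by
    exact_mod_cast Nat.pos_of_ne_zero hMr1
  have hNrpos : (0:ℚ) < (levN n r : ℚ) := by
    exact_mod_cast Nat.pos_of_ne_zero hNr
  set Xc : ℚ := (levN n (r + 1) : ℚ) / (levN (n + 1) (r + 1) : ℚ) with hXc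
  set Zc : ℚ := (Npred n r : ℚ) / (levN (n + 1) r : ℚ) with hZc
  set Yc : ℚ := 1 / (levN (n + 1) (r + 1) : ℚ)
    - (Npred n r : ℚ) / ((levN (n + 1) r : ℚ) * (levN n r : ℚ)) with hYc
  have hXnn : 0 ≤ Xc := div_nonneg (Nat.cast_nonneg _) (Nat.cast_nonneg _)
  have hZnn : 0 ≤ Zc := div_nonneg (Nat.cast_nonneg _) (Nat.cast_nonneg _)
  have hYnn : 0 ≤ Yc := by
    rw [hYc, sub_nonneg]
    have hkey : Npred n r * levN (n + 1) (r + 1) ≤ levN (n + 1) r * levN n r := by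
      cases r with
      | zero => simp [Npred]
      | succ s =>
        rw [hrec1, hrec0]
        have hlc := lc s
        have hNp : Npred n (s + 1) = levN n s := rfl
        rw [hNp]
        nlinarith [hlc]
    rw [div_le_div_iff₀ (mul_pos hMrpos hNrpos) hMr1pos]
    calc (Npred n r : ℚ) * (levN (n + 1) (r + 1) : ℚ)
        = ((Npred n r * levN (n + 1) (r + 1) : ℕ) : ℚ) := by push_cast; ring
      _ ≤ ((levN (n + 1) r * levN n r : ℕ) : ℚ) := by exact_mod_cast hkey
      _ = 1 * ((levN (n + 1) r : ℚ) * (levN n r : ℚ)) := by push_cast; ring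
  have e1 : (levN (n + 1) (r + 1) : ℚ)
      = (levN n (r + 1) : ℚ) + (n : ℚ) * (levN n r : ℚ) := by
    exact_mod_cast congrArg (Nat.cast : ℕ → ℚ) hrec1
  have e0 : (levN (n + 1) r : ℚ)
      = (levN n r : ℚ) + (n : ℚ) * (Npred n r : ℚ) := by
    exact_mod_cast congrArg (Nat.cast : ℕ → ℚ) hrec0
  -- the flow
  set G : (Fin (n + 1) × Equiv.Perm (Fin n)) → (Fin (n + 1) × Equiv.Perm (Fin n)) → ℚ :=
    fun w w' =>
      if w.1 = 0 ∧ w'.1 = 0 then Xc * F1 w.2 w'.2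
      else if w.1 = 0 ∧ w'.2 = w.2 ∧ absLength w.2 = r then Yc
      else if w.1 = w'.1 then Zc * F0 w.2 w'.2
      else 0
    with hG
  refine ⟨fun π π' => G (Equiv.Perm.decomposeFin π) (Equiv.Perm.decomposeFin π'),
    ?_, ?_, ?_, ?_⟩
  · -- support
    intro π π' hne
    simp only at hne
    by_cases h1 : (Equiv.Perm.decomposeFin π).1 = 0 ∧ (Equiv.Perm.decomposeFin π').1 = 0
    · rw [hG] at hne
      simp only [if_pos h1] at hne
      have hF1ne : F1 (Equiv.Perm.decomposeFin π).2 (Equiv.Perm.decomposeFin π').2 ≠ 0 :=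
        fun h => hne (by rw [h, mul_zero])
      obtain ⟨ha, hb, hab⟩ := hF1supp _ _ hF1ne
      refine ⟨?_, ?_, ?_⟩
      · have h := rank_decomposed π
        rw [if_pos h1.1] at h
        omega
      · have h := rank_decomposed π'
        rw [if_pos h1.2] at h
        omega
      · rw [hat_decomposed π h1.1, hat_decomposed π' h1.2]
        exact absLe_hat hab
    · by_cases h2 : (Equiv.Perm.decomposeFin π).1 = 0 ∧
          (Equiv.Perm.decomposeFin π').2 = (Equiv.Perm.decomposeFin π).2 ∧
          absLength (Equiv.Perm.decomposeFin π).2 = r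
      · have hq : (Equiv.Perm.decomposeFin π').1 ≠ 0 := fun h => h1 ⟨h2.1, h⟩
        refine ⟨?_, ?_, ?_⟩
        · have h := rank_decomposed π
          rw [if_pos h2.1] at h
          have := h2.2.2
          omega
        · have h := rank_decomposed π'
          rw [if_neg hq, h2.2.1] at h
          have := h2.2.2
          omega
        · rw [hat_decomposed π h2.1, phi_decomposed π', h2.2.1]
          exact absLe_edge_y hq
      · by_cases h3 : (Equiv.Perm.decomposeFin π).1 = (Equiv.Perm.decomposeFin π').1
        · rw [hG] at hne
          simp only [if_neg h1, if_neg h2, if_pos h3] at hne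
          have hF0ne : F0 (Equiv.Perm.decomposeFin π).2 (Equiv.Perm.decomposeFin π').2 ≠ 0 :=
            fun h => hne (by rw [h, mul_zero])
          obtain ⟨ha, hb, hab⟩ := hF0supp _ _ hF0ne
          have hp : (Equiv.Perm.decomposeFin π).1 ≠ 0 := fun h => h1 ⟨h, by rw [← h3]; exact h⟩
          have hq : (Equiv.Perm.decomposeFin π').1 ≠ 0 := fun h => hp (by rw [h3, h])
          refine ⟨?_, ?_, ?_⟩
          · have h := rank_decomposed π
            rw [if_neg hp] at h
            omega
          · have h := rank_decomposed π'
            rw [if_neg hq] at h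
            omega
          · rw [phi_decomposed π, phi_decomposed π', ← h3]
            exact absLe_phi _ hab
        · rw [hG] at hne
          simp only [if_neg h1, if_neg h2, if_neg h3] at hne
          exact absurd rfl hne
  · -- nonneg
    intro π π'
    simp only [hG]
    split_ifs
    · exact mul_nonneg hXnn (hF1nn _ _)
    · exact hYnn
    · exact mul_nonneg hZnn (hF0nn _ _)
    · exact le_refl 0
  · -- out-sums
    intro π hπ
    have hsum : ∑ π', G (Equiv.Perm.decomposeFin π) (Equiv.Perm.decomposeFin π')
        = ∑ w', G (Equiv.Perm.decomposeFin π) w' :=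
      Equiv.sum_comp Equiv.Perm.decomposeFin (G (Equiv.Perm.decomposeFin π))
    show ∑ π', G (Equiv.Perm.decomposeFin π) (Equiv.Perm.decomposeFin π')
        = 1 / (levN (n + 1) r : ℚ)
    rw [hsum, Fintype.sum_prod_type]
    have hr : absLength (Equiv.Perm.decomposeFin π).2
        + (if (Equiv.Perm.decomposeFin π).1 = 0 then 0 else 1) = r := by
      rw [← rank_decomposed π]; exact hπ
    by_cases hp : (Equiv.Perm.decomposeFin π).1 = 0
    · have ha : absLength (Equiv.Perm.decomposeFin π).2 = r := by
        rw [if_pos hp] at hr; omega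
      rw [Fin.sum_univ_succ]
      have hterm0 : ∑ b, G (Equiv.Perm.decomposeFin π) ((0 : Fin (n + 1)), b)
          = Xc * ∑ b, F1 (Equiv.Perm.decomposeFin π).2 b := by
        rw [Finset.mul_sum]
        refine Finset.sum_congr rfl fun b _ => ?_
        simp only [hG]
        rw [if_pos ⟨hp, trivial⟩]
      have hterm1 : ∀ i : Fin n,
          ∑ b, G (Equiv.Perm.decomposeFin π) (Fin.succ i, b) = Yc := by
        intro i
        have heach : ∀ b : Equiv.Perm (Fin n),
            G (Equiv.Perm.decomposeFin π) (Fin.succ i, b)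
              = if (Equiv.Perm.decomposeFin π).2 = b then Yc else 0 := by
          intro b
          simp only [hG]
          rw [if_neg (fun h => Fin.succ_ne_zero i h.2)]
          by_cases hb : b = (Equiv.Perm.decomposeFin π).2
          · rw [if_pos ⟨hp, hb, ha⟩, if_pos hb.symm]
          · rw [if_neg (fun h => hb h.2.1),
              if_neg (fun h => Fin.succ_ne_zero i (by rw [hp] at h; exact h.symm)),
              if_neg (fun h => hb h.symm)]
        rw [Finset.sum_congr rfl (fun b _ => heach b),
          Finset.sum_ite_eq Finset.univ (Equiv.Perm.decomposeFin π).2 (fun _ => Yc)]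
        simp
      rw [hterm0, Finset.sum_congr rfl (fun i _ => hterm1 i), Finset.sum_const,
        Finset.card_univ, Fintype.card_fin, nsmul_eq_mul]
      have hS1 : Xc * (∑ b, F1 (Equiv.Perm.decomposeFin π).2 b)
          = ((levN n (r + 1) : ℚ) / (levN n r : ℚ)) / (levN (n + 1) (r + 1) : ℚ) := by
        rw [hXc, div_mul_eq_mul_div, hF1out _ ha]
      rw [hS1, hYc]
      have hA : ((levN n (r + 1) : ℚ) + (n : ℚ) * (levN n r : ℚ)) ≠ 0 := by
        rw [← e1]; exact hMr1Q
      have hB : ((levN n r : ℚ) + (n : ℚ) * (Npred n r : ℚ)) ≠ 0 := by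
        rw [← e0]; exact hMrQ
      rw [e0, e1]
      have hA' : ((levN n (r + 1) : ℚ) + (levN n r : ℚ) * (n : ℚ)) ≠ 0 := by rwa [mul_comm]
      field_simp
      ring
    · have ha1 : absLength (Equiv.Perm.decomposeFin π).2 + 1 = r := by
        rw [if_neg hp] at hr; omega
      obtain ⟨s, rfl⟩ : ∃ s, r = s + 1 := ⟨absLength (Equiv.Perm.decomposeFin π).2, by omega⟩
      have hNs : levN n s ≠ 0 := zp s hNr
      have hterm : ∀ q : Fin (n + 1),
          ∑ b, G (Equiv.Perm.decomposeFin π) (q, b)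
            = if (Equiv.Perm.decomposeFin π).1 = q
                then Zc * ∑ b, F0 (Equiv.Perm.decomposeFin π).2 b else 0 := by
        intro q
        by_cases hq : (Equiv.Perm.decomposeFin π).1 = q
        · rw [if_pos hq, Finset.mul_sum]
          refine Finset.sum_congr rfl fun b _ => ?_
          simp only [hG]
          rw [if_neg (fun h => hp h.1), if_neg (fun h => hp h.1), if_pos hq]
        · rw [if_neg hq]
          refine Finset.sum_eq_zero fun b _ => ?_
          simp only [hG]
          rw [if_neg (fun h => hp h.1), if_neg (fun h => hp h.1), if_neg hq]
      rw [Finset.sum_congr rfl (fun q _ => hterm q),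
        Finset.sum_ite_eq Finset.univ (Equiv.Perm.decomposeFin π).1
          (fun _ => Zc * ∑ b, F0 (Equiv.Perm.decomposeFin π).2 b)]
      simp only [Finset.mem_univ, if_true]
      rw [hF0out _ ha1, hZc]
      have hNpQ : (Npred n (s + 1) : ℚ) ≠ 0 := by
        show ((levN n s : ℕ) : ℚ) ≠ 0
        exact Nat.cast_ne_zero.2 hNs
      field_simp
  · -- in-sums
    intro π' hπ'
    have hsum : ∑ π, G (Equiv.Perm.decomposeFin π) (Equiv.Perm.decomposeFin π')
        = ∑ w, G w (Equiv.Perm.decomposeFin π') :=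
      Equiv.sum_comp Equiv.Perm.decomposeFin (fun w => G w (Equiv.Perm.decomposeFin π'))
    show ∑ π, G (Equiv.Perm.decomposeFin π) (Equiv.Perm.decomposeFin π')
        = 1 / (levN (n + 1) (r + 1) : ℚ)
    rw [hsum, Fintype.sum_prod_type]
    have hr : absLength (Equiv.Perm.decomposeFin π').2
        + (if (Equiv.Perm.decomposeFin π').1 = 0 then 0 else 1) = r + 1 := by
      rw [← rank_decomposed π']; exact hπ'
    by_cases hq : (Equiv.Perm.decomposeFin π').1 = 0
    · have hb : absLength (Equiv.Perm.decomposeFin π').2 = r + 1 := by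
        rw [if_pos hq] at hr; omega
      have hNr1ne : levN n (r + 1) ≠ 0 := by
        have hmem : (Equiv.Perm.decomposeFin π').2 ∈ absLevel n (r + 1) := by
          simp [absLevel, hb]
        exact Finset.card_ne_zero_of_mem hmem
      rw [Fin.sum_univ_succ]
      have hterm0 : ∑ a, G ((0 : Fin (n + 1)), a) (Equiv.Perm.decomposeFin π')
          = Xc * ∑ a, F1 a (Equiv.Perm.decomposeFin π').2 := by
        rw [Finset.mul_sum]
        refine Finset.sum_congr rfl fun a _ => ?_
        simp only [hG]
        rw [if_pos ⟨trivial, hq⟩]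
      have hterm1 : ∀ i : Fin n,
          ∑ a, G (Fin.succ i, a) (Equiv.Perm.decomposeFin π') = 0 := by
        intro i
        refine Finset.sum_eq_zero fun a _ => ?_
        simp only [hG]
        rw [if_neg (fun h => Fin.succ_ne_zero i h.1),
          if_neg (fun h => Fin.succ_ne_zero i h.1),
          if_neg (fun h => Fin.succ_ne_zero i (h.trans hq))]
      rw [hterm0, Finset.sum_congr rfl (fun i _ => hterm1 i), Finset.sum_const_zero,
        add_zero, hF1in _ hb, hXc]
      have hNr1Q : (levN n (r + 1) : ℚ) ≠ 0 := Nat.cast_ne_zero.2 hNr1ne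
      field_simp
    · have hb : absLength (Equiv.Perm.decomposeFin π').2 = r := by
        rw [if_neg hq] at hr; omega
      rw [Fin.sum_univ_succ]
      have hterm0 : ∑ a, G ((0 : Fin (n + 1)), a) (Equiv.Perm.decomposeFin π') = Yc := by
        have heach : ∀ a : Equiv.Perm (Fin n),
            G ((0 : Fin (n + 1)), a) (Equiv.Perm.decomposeFin π')
              = if (Equiv.Perm.decomposeFin π').2 = a then Yc else 0 := by
          intro a
          simp only [hG]
          rw [if_neg (fun h => hq h.2)]
          by_cases hba : (Equiv.Perm.decomposeFin π').2 = a
          · rw [if_pos ⟨trivial, hba, by rw [← hba]; exact hb⟩, if_pos hba]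
          · rw [if_neg (fun h => hba h.2.1), if_neg (fun h => hq h.symm), if_neg hba]
        rw [Finset.sum_congr rfl (fun a _ => heach a),
          Finset.sum_ite_eq Finset.univ (Equiv.Perm.decomposeFin π').2 (fun _ => Yc)]
        simp
      have hterm1 : ∀ i : Fin n,
          ∑ a, G (Fin.succ i, a) (Equiv.Perm.decomposeFin π')
            = if Fin.succ i = (Equiv.Perm.decomposeFin π').1
                then Zc * ∑ a, F0 a (Equiv.Perm.decomposeFin π').2 else 0 := by
        intro i
        by_cases hiq : Fin.succ i = (Equiv.Perm.decomposeFin π').1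
        · rw [if_pos hiq, Finset.mul_sum]
          refine Finset.sum_congr rfl fun a _ => ?_
          simp only [hG]
          rw [if_neg (fun h => Fin.succ_ne_zero i h.1),
            if_neg (fun h => Fin.succ_ne_zero i h.1), if_pos hiq]
        · rw [if_neg hiq]
          refine Finset.sum_eq_zero fun a _ => ?_
          simp only [hG]
          rw [if_neg (fun h => Fin.succ_ne_zero i h.1),
            if_neg (fun h => Fin.succ_ne_zero i h.1), if_neg hiq]
      rw [hterm0, Finset.sum_congr rfl (fun i _ => hterm1 i)]
      obtain ⟨j, hj⟩ : ∃ j : Fin n, (Equiv.Perm.decomposeFin π').1 = Fin.succ j :=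
        ⟨((Equiv.Perm.decomposeFin π').1).pred hq, by simp⟩
      have hsucc : ∀ i : Fin n,
          (if Fin.succ i = (Equiv.Perm.decomposeFin π').1
            then Zc * ∑ a, F0 a (Equiv.Perm.decomposeFin π').2 else 0)
          = if j = i then Zc * ∑ a, F0 a (Equiv.Perm.decomposeFin π').2 else 0 := by
        intro i
        rw [hj]
        by_cases hji : j = i
        · rw [if_pos (by rw [hji]), if_pos hji]
        · rw [if_neg (fun h => hji (Fin.succ_injective n h).symm), if_neg hji]
      rw [Finset.sum_congr rfl (fun i _ => hsucc i),
        Finset.sum_ite_eq Finset.univ j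
          (fun _ => Zc * ∑ a, F0 a (Equiv.Perm.decomposeFin π').2)]
      simp only [Finset.mem_univ, if_true]
      have hZS : Zc * ∑ a, F0 a (Equiv.Perm.decomposeFin π').2
          = ((Npred n r : ℚ) / (levN n r : ℚ)) / (levN (n + 1) r : ℚ) := by
        rw [hZc, div_mul_eq_mul_div, hF0in _ hb]
      rw [hZS, hYc]
      field_simp
      ring

end Step

section Main

lemma absLength_fin_zero (π : Equiv.Perm (Fin 0)) : absLength π = 0 := by
  simp [absLength]

lemma invariant (n : ℕ) :
    (∀ t, levN n (t + 1) ≠ 0 → levN n t ≠ 0) ∧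
    (∀ t, levN n t * levN n (t + 2) ≤ levN n (t + 1) * levN n (t + 1)) ∧
    (∀ t, levN n t ≠ 0 → levN n (t + 1) ≠ 0 → ∃ F, IsFlow n t F) := by
  induction n with
  | zero =>
    have hz : ∀ t, levN 0 (t + 1) = 0 := by
      intro t
      rw [levN, Finset.card_eq_zero]
      rw [absLevel, Finset.filter_false_of_mem]
      intro π _
      rw [absLength_fin_zero]
      omega
    refine ⟨?_, ?_, ?_⟩
    · intro t h; exact absurd (hz t) h
    · intro t; rw [hz (t + 1)]; simp
    · intro t _ h; exact absurd (hz t) h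
  | succ n ih =>
    obtain ⟨zp, lc, flows⟩ := ih
    have cross : ∀ t, levN n t * levN n (t + 3) ≤ levN n (t + 1) * levN n (t + 2) := by
      intro t
      by_cases h1 : levN n (t + 1) = 0
      · have h2 : levN n (t + 2) = 0 := by
          by_contra hc; exact (zp (t + 1) hc) h1
        have h3 : levN n (t + 3) = 0 := by
          by_contra hc; exact (zp (t + 2) hc) h2
        simp [h3]
      · by_cases h2 : levN n (t + 2) = 0
        · have h3 : levN n (t + 3) = 0 := by
            by_contra hc; exact (zp (t + 2) hc) h2
          simp [h3]
        · have hpos : 0 < levN n (t + 1) * levN n (t + 2) :=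
            Nat.mul_pos (Nat.pos_of_ne_zero h1) (Nat.pos_of_ne_zero h2)
          have key : (levN n t * levN n (t + 3)) * (levN n (t + 1) * levN n (t + 2))
              ≤ (levN n (t + 1) * levN n (t + 2)) * (levN n (t + 1) * levN n (t + 2)) := by
            calc (levN n t * levN n (t + 3)) * (levN n (t + 1) * levN n (t + 2))
                = (levN n t * levN n (t + 2)) * (levN n (t + 1) * levN n (t + 3)) := by ring
              _ ≤ (levN n (t + 1) * levN n (t + 1)) * (levN n (t + 2) * levN n (t + 2)) :=
                  Nat.mul_le_mul (lc t) (lc (t + 1))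
              _ = (levN n (t + 1) * levN n (t + 2)) * (levN n (t + 1) * levN n (t + 2)) := by
                  ring
          exact Nat.le_of_mul_le_mul_right key hpos
    refine ⟨?_, ?_, fun t => step_flow n t zp lc flows⟩
    · intro t h
      have hrec : levN (n + 1) (t + 1) = levN n (t + 1) + n * levN n t := levN_rec n (t + 1)
      have hrec' : levN (n + 1) t = levN n t + n * Npred n t := levN_rec n t
      have h1 : levN n t ≠ 0 := by
        intro h0
        have h2 : levN n (t + 1) = 0 := by
          by_contra hc; exact (zp t hc) h0
        rw [hrec, h2, h0] at h
        simp at h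
      intro hh
      rw [hrec'] at hh
      omega
    · intro t
      cases t with
      | zero =>
        have h0 : levN (n + 1) 0 = levN n 0 := by
          simpa [Npred] using levN_rec n 0
        have h1 : levN (n + 1) 1 = levN n 1 + n * levN n 0 := levN_rec n 1
        have h2 : levN (n + 1) 2 = levN n 2 + n * levN n 1 := levN_rec n 2
        rw [h0, h1, h2]
        calc levN n 0 * (levN n 2 + n * levN n 1)
            = levN n 0 * levN n 2 + n * (levN n 0 * levN n 1) := by ring
          _ ≤ levN n 1 * levN n 1 + n * (levN n 0 * levN n 1) :=
              Nat.add_le_add_right (lc 0) _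
          _ ≤ (levN n 1 * levN n 1 + n * (levN n 0 * levN n 1))
              + (n * (levN n 1 * levN n 0) + n * n * (levN n 0 * levN n 0)) :=
              Nat.le_add_right _ _
          _ = (levN n 1 + n * levN n 0) * (levN n 1 + n * levN n 0) := by ring
      | succ s =>
        have h1 : levN (n + 1) (s + 1) = levN n (s + 1) + n * levN n s := levN_rec n (s + 1)
        have h2 : levN (n + 1) (s + 2) = levN n (s + 2) + n * levN n (s + 1) := levN_rec n (s + 2)
        have h3 : levN (n + 1) (s + 3) = levN n (s + 3) + n * levN n (s + 2) := levN_rec n (s + 3)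
        rw [h1, h2, h3]
        nlinarith [lc (s + 1), Nat.mul_le_mul_left n (cross s),
          Nat.mul_le_mul_left (n * n) (lc s)]

end Main

/-- `S_n` under absolute order satisfies the normalized matching condition
upward between consecutive levels: for `0 ≤ r ≤ n-2` and `X ⊆ L_r`, with
`D(X) = {π ∈ L_{r+1} : ∃ σ ∈ X, σ ≤_T π}`, one has
`|X| · |L_{r+1}| ≤ |D(X)| · |L_r|`. -/
theorem absolute_order_normalized_matching_up (n r : ℕ) (hr : r ≤ n - 2)
    (X : Finset (Equiv.Perm (Fin n))) (hX : X ⊆ absLevel n r) :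
    X.card * (absLevel n (r + 1)).card ≤
      ((absLevel n (r + 1)).filter fun π => ∃ σ ∈ X, absLe σ π).card *
        (absLevel n r).card := by
  rcases Finset.eq_empty_or_nonempty X with rfl | hXne
  · simp
  by_cases hL1 : (absLevel n (r + 1)).card = 0
  · rw [hL1]
    simp
  obtain ⟨σ, hσ⟩ := hXne
  have hNr : (absLevel n r).card ≠ 0 := Finset.card_ne_zero_of_mem (hX hσ)
  obtain ⟨-, -, flows⟩ := invariant n
  obtain ⟨F, hF⟩ := flows r hNr hL1
  exact flow_nm hF hNr hL1 X hX
end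

section
/- The symmetric group S_n under absolute order satisfies the normalized matching condition downward between every pair of consecutive levels: for every r with 0 ≤ r ≤ n − 2 and every subset Y of the level L_{r+1} = {π ∈ S_n : ℓ_T(π) = r+1}, letting D(Y) = {σ ∈ L_r : there exists π ∈ Y with σ ≤_T π}, one has |Y| · |L_r| ≤ |D(Y)| · |L_{r+1}|. -/
namespace AbsNM
open Finset

variable {n : ℕ}

abbrev V (n : ℕ) := ∀ i : Fin n, Fin (i.1 + 1)

def suppV (v : V n) : Finset (Fin n) := Finset.univ.filter (fun i => v i ≠ Fin.last i.1)
def rankV (v : V n) : ℕ := (suppV v).card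
def dropV (v : V n) (i : Fin n) : V n := Function.update v i (Fin.last i.1)
def bnd (Y : Finset (V n)) : Finset (V n) :=
  Y.biUnion (fun v => (suppV v).image (fun i => dropV v i))
def ew (A : Finset (Fin n)) (k : ℕ) : ℕ := ∑ S ∈ A.powersetCard k, ∏ i ∈ S, i.1

lemma ew_zero (A : Finset (Fin n)) : ew A 0 = 1 := by
  simp [ew]

lemma ew_insert {a : Fin n} {A : Finset (Fin n)} (ha : a ∉ A) (k : ℕ) :
    ew (insert a A) (k+1) = ew A (k+1) + a.1 * ew A k := by
  classical
  rw [ew, Finset.powersetCard_succ_insert ha]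
  rw [Finset.sum_union]
  · congr 1
    rw [Finset.sum_image, ew, Finset.mul_sum]
    · apply Finset.sum_congr rfl
      intro S hS
      rw [Finset.mem_powersetCard] at hS
      rw [Finset.prod_insert (fun h => ha (hS.1 h))]
    · intro S hS T hT hST
      rw [Finset.mem_coe, Finset.mem_powersetCard] at hS hT
      have : ∀ U : Finset (Fin n), U ⊆ A → (insert a U).erase a = U := by
        intro U hU
        rw [Finset.erase_insert (fun h => ha (hU h))]
      rw [← this S hS.1, ← this T hT.1, hST]
  · rw [Finset.disjoint_right]
    intro S hS hS'
    rw [Finset.mem_image] at hS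
    rw [Finset.mem_powersetCard] at hS'
    obtain ⟨T, hT, rfl⟩ := hS
    exact ha (hS'.1 (Finset.mem_insert_self a T))

lemma ew_eq_zero {A : Finset (Fin n)} {k : ℕ} (h : A.card < k) : ew A k = 0 := by
  rw [ew, Finset.powersetCard_eq_empty.2 h, Finset.sum_empty]

lemma ew_pos {A : Finset (Fin n)} (hA : ∀ i ∈ A, 0 < i.1) {k : ℕ} (hk : k ≤ A.card) :
    0 < ew A k := by
  obtain ⟨S, hS, hcard⟩ := Finset.exists_subset_card_eq hk
  have hmem : S ∈ A.powersetCard k := Finset.mem_powersetCard.2 ⟨hS, hcard⟩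
  have hpos : 0 < ∏ i ∈ S, i.1 := Finset.prod_pos (fun i hi => hA i (hS hi))
  exact lt_of_lt_of_le hpos (Finset.single_le_sum (f := fun S => ∏ i ∈ S, i.1) (fun _ _ => Nat.zero_le _) hmem)

lemma newton : ∀ (A : Finset (Fin n)), (∀ i ∈ A, 0 < i.1) →
    ∀ k, ew A k * ew A (k+2) ≤ ew A (k+1) * ew A (k+1) := by
  classical
  intro A
  induction A using Finset.induction_on with
  | empty =>
    intro _ k
    have : (∅ : Finset (Fin n)).card < k + 2 := by simp
    rw [ew_eq_zero this, Nat.mul_zero]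
    exact Nat.zero_le _
  | @insert a s ha IH =>
    intro hA k
    have hs : ∀ i ∈ s, 0 < i.1 := fun i hi => hA i (Finset.mem_insert_of_mem hi)
    have hN := IH hs
    have hL : ∀ j, ew s j * ew s (j+3) ≤ ew s (j+1) * ew s (j+2) := by
      intro j
      by_cases h1 : s.card < j + 3
      · rw [ew_eq_zero h1, Nat.mul_zero]; exact Nat.zero_le _
      · push_neg at h1
        have hpos : 0 < ew s (j+1) * ew s (j+2) :=
          Nat.mul_pos (ew_pos hs (by omega)) (ew_pos hs (by omega))
        have h2 := Nat.mul_le_mul (hN j) (hN (j+1))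
        -- (e_j e_{j+2}) (e_{j+1} e_{j+3}) ≤ (e_{j+1}e_{j+1})(e_{j+2}e_{j+2})
        have key : (ew s j * ew s (j+3)) * (ew s (j+1) * ew s (j+2)) ≤
            (ew s (j+1) * ew s (j+2)) * (ew s (j+1) * ew s (j+2)) := by
          calc (ew s j * ew s (j+3)) * (ew s (j+1) * ew s (j+2))
              = (ew s j * ew s (j+2)) * (ew s (j+1) * ew s (j+3)) := by ring
            _ ≤ (ew s (j+1) * ew s (j+1)) * (ew s (j+2) * ew s (j+2)) := h2
            _ = (ew s (j+1) * ew s (j+2)) * (ew s (j+1) * ew s (j+2)) := by ring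
        exact Nat.le_of_mul_le_mul_right key hpos
    set w := a.1 with hw
    match k with
    | 0 =>
      rw [ew_zero, Nat.one_mul, ew_insert ha, ew_insert ha, ew_zero, Nat.mul_one]
      have h0 := hN 0
      rw [ew_zero, Nat.one_mul] at h0
      nlinarith [Nat.zero_le (w * ew s 1), Nat.zero_le w]
    | (k+1) =>
      have e1 : k+1+1+1 = (k+2)+1 := by ring
      have e2 : k+1+1 = (k+1)+1 := by ring
      rw [ew_insert ha k, e1, e2, ew_insert ha (k+1), ew_insert ha (k+2)]
      have h0 := hN (k+1)
      have h2 := hN k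
      have h1 := hL k
      nlinarith [mul_le_mul_right h1 w, mul_le_mul_right h2 (w*w)]

lemma newton_L {A : Finset (Fin n)} (hA : ∀ i ∈ A, 0 < i.1) (j : ℕ) :
    ew A j * ew A (j+3) ≤ ew A (j+1) * ew A (j+2) := by
  by_cases h1 : A.card < j + 3
  · rw [ew_eq_zero h1, Nat.mul_zero]; exact Nat.zero_le _
  · push_neg at h1
    have hpos : 0 < ew A (j+1) * ew A (j+2) :=
      Nat.mul_pos (ew_pos hA (by omega)) (ew_pos hA (by omega))
    have h2 := Nat.mul_le_mul (newton A hA j) (newton A hA (j+1))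
    have key : (ew A j * ew A (j+3)) * (ew A (j+1) * ew A (j+2)) ≤
        (ew A (j+1) * ew A (j+2)) * (ew A (j+1) * ew A (j+2)) := by
      calc (ew A j * ew A (j+3)) * (ew A (j+1) * ew A (j+2))
          = (ew A j * ew A (j+2)) * (ew A (j+1) * ew A (j+3)) := by ring
        _ ≤ (ew A (j+1) * ew A (j+1)) * (ew A (j+2) * ew A (j+2)) := h2
        _ = (ew A (j+1) * ew A (j+2)) * (ew A (j+1) * ew A (j+2)) := by ring
    exact Nat.le_of_mul_le_mul_right key hpos


lemma mem_suppV {v : V n} {i : Fin n} : i ∈ suppV v ↔ v i ≠ Fin.last i.1 := by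
  simp [suppV]

lemma dropV_apply_self (v : V n) (i : Fin n) : dropV v i i = Fin.last i.1 := by
  simp [dropV]

lemma dropV_apply_ne (v : V n) {i j : Fin n} (h : j ≠ i) : dropV v i j = v j := by
  simp [dropV, Function.update_of_ne h]

lemma suppV_dropV {v : V n} {i : Fin n} : suppV (dropV v i) = (suppV v).erase i := by
  ext j
  rcases eq_or_ne j i with rfl | hj
  · simp [mem_suppV, dropV_apply_self]
  · simp [mem_suppV, dropV_apply_ne v hj, Finset.mem_erase, hj]

lemma rankV_dropV {v : V n} {i : Fin n} (hi : i ∈ suppV v) :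
    rankV (dropV v i) + 1 = rankV v := by
  rw [rankV, rankV, suppV_dropV, Finset.card_erase_of_mem hi]
  have : 0 < (suppV v).card := Finset.card_pos.2 ⟨i, hi⟩
  omega

lemma mem_bnd {Y : Finset (V n)} {u : V n} :
    u ∈ bnd Y ↔ ∃ v ∈ Y, ∃ i ∈ suppV v, u = dropV v i := by
  simp [bnd, eq_comm]

lemma bnd_mono {Y Z : Finset (V n)} (h : Y ⊆ Z) : bnd Y ⊆ bnd Z :=
  Finset.biUnion_subset_biUnion_of_subset_left _ h

lemma bnd_spec {Y : Finset (V n)} {A : Finset (Fin n)} {r : ℕ}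
    (hY : ∀ v ∈ Y, suppV v ⊆ A ∧ rankV v = r + 1) :
    ∀ u ∈ bnd Y, suppV u ⊆ A ∧ rankV u = r := by
  intro u hu
  obtain ⟨v, hv, i, hi, rfl⟩ := mem_bnd.1 hu
  obtain ⟨h1, h2⟩ := hY v hv
  constructor
  · rw [suppV_dropV]
    exact (Finset.erase_subset _ _).trans h1
  · have := rankV_dropV hi
    omega

lemma rankV_le_card {v : V n} {A : Finset (Fin n)} (h : suppV v ⊆ A) :
    rankV v ≤ A.card := Finset.card_le_card h

lemma eq_of_rankV_eq_zero {v w : V n} (hv : rankV v = 0) (hw : rankV w = 0) : v = w := by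
  have hv' : suppV v = ∅ := Finset.card_eq_zero.1 hv
  have hw' : suppV w = ∅ := Finset.card_eq_zero.1 hw
  funext i
  have h1 : i ∉ suppV v := by rw [hv']; exact Finset.notMem_empty i
  have h2 : i ∉ suppV w := by rw [hw']; exact Finset.notMem_empty i
  rw [mem_suppV, not_not] at h1 h2
  rw [h1, h2]


lemma count_suppV (S : Finset (Fin n)) :
    (Finset.univ.filter fun v : V n => suppV v = S).card = ∏ i ∈ S, i.1 := by
  classical
  rw [← Fintype.card_subtype]
  have e1 : {v : V n // suppV v = S} ≃ {v : V n // ∀ i, (v i ≠ Fin.last i.1 ↔ i ∈ S)} := by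
    apply Equiv.subtypeEquivRight
    intro v
    constructor
    · intro h i; rw [← h, mem_suppV]
    · intro h
      ext i
      rw [mem_suppV, h i]
  have e2 : {v : V n // ∀ i, (v i ≠ Fin.last i.1 ↔ i ∈ S)} ≃
      ∀ i : Fin n, {x : Fin (i.1+1) // x ≠ Fin.last i.1 ↔ i ∈ S} :=
    Equiv.subtypePiEquivPi (p := fun (i : Fin n) (x : Fin (i.1+1)) => x ≠ Fin.last i.1 ↔ i ∈ S)
  rw [Fintype.card_congr (e1.trans e2), Fintype.card_pi]
  have : ∀ i : Fin n, Fintype.card {x : Fin (i.1+1) // x ≠ Fin.last i.1 ↔ i ∈ S} =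
      if i ∈ S then i.1 else 1 := by
    intro i
    by_cases hi : i ∈ S
    · rw [if_pos hi]
      have e3 : {x : Fin (i.1+1) // x ≠ Fin.last i.1 ↔ i ∈ S} ≃ {x : Fin (i.1+1) // x ≠ Fin.last i.1} :=
        Equiv.subtypeEquivRight (by simp [hi])
      rw [Fintype.card_congr e3, Fintype.card_subtype_compl, Fintype.card_subtype_eq, Fintype.card_fin]
      omega
    · rw [if_neg hi]
      have e3 : {x : Fin (i.1+1) // x ≠ Fin.last i.1 ↔ i ∈ S} ≃ {x : Fin (i.1+1) // x = Fin.last i.1} :=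
        Equiv.subtypeEquivRight (by simp [hi])
      rw [Fintype.card_congr e3, Fintype.card_subtype_eq]
  rw [Finset.prod_congr rfl (fun i _ => this i)]
  rw [Finset.prod_ite_mem Finset.univ S (fun i : Fin n => i.1)]
  rw [Finset.univ_inter]

lemma count_rank (A : Finset (Fin n)) (k : ℕ) :
    (Finset.univ.filter fun v : V n => suppV v ⊆ A ∧ rankV v = k).card = ew A k := by
  classical
  rw [Finset.card_eq_sum_card_fiberwise (f := suppV) (t := A.powersetCard k)
    (fun v hv => by
      rw [Finset.mem_coe, Finset.mem_filter] at hv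
      exact Finset.mem_powersetCard.2 ⟨hv.2.1, hv.2.2⟩)]
  rw [ew]
  apply Finset.sum_congr rfl
  intro S hS
  rw [Finset.mem_powersetCard] at hS
  rw [← count_suppV S]
  congr 1
  ext v
  simp only [Finset.mem_filter, Finset.mem_univ, true_and]
  constructor
  · rintro ⟨_, h⟩; exact h
  · rintro rfl
    exact ⟨⟨hS.1, hS.2⟩, rfl⟩



section NMInduction
variable {n : ℕ}

lemma Xstep {s : Finset (Fin n)} (hs : ∀ i ∈ s, 0 < i.1)
    (IH : ∀ (r : ℕ) (Y : Finset (V n)), (∀ v ∈ Y, suppV v ⊆ s ∧ rankV v = r + 1) →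
      ew s r * Y.card ≤ ew s (r+1) * (bnd Y).card)
    (r : ℕ) (Y₀ Z : Finset (V n))
    (hY₀ : ∀ v ∈ Y₀, suppV v ⊆ s ∧ rankV v = r + 2)
    (hZ : ∀ z ∈ Z, suppV z ⊆ s ∧ rankV z = r + 1) :
    ew s r * Y₀.card ≤ ew s (r+1) * ((bnd Y₀) \ Z).card + ew s (r+2) * (bnd Z).card := by
  classical
  by_cases hcard : r + 1 ≤ s.card
  · have hpos : 0 < ew s (r+1) := ew_pos hs hcard
    have i0 : ew s (r+1) * Y₀.card ≤ ew s (r+2) * (bnd Y₀).card := IH (r+1) Y₀ hY₀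
    have hBspec := bnd_spec hY₀
    have i3 : ew s r * ((bnd Y₀) ∩ Z).card ≤ ew s (r+1) * (bnd Z).card := by
      have h1 : ew s r * ((bnd Y₀) ∩ Z).card ≤ ew s (r+1) * (bnd ((bnd Y₀) ∩ Z)).card := by
        apply IH r
        intro u hu
        exact hBspec u (Finset.mem_of_mem_inter_left hu)
      refine h1.trans (Nat.mul_le_mul_left _ (Finset.card_le_card (bnd_mono Finset.inter_subset_right)))
    have iN : ew s r * ew s (r+2) ≤ ew s (r+1) * ew s (r+1) := newton s hs r
    have hsplit : ((bnd Y₀) \ Z).card + ((bnd Y₀) ∩ Z).card = (bnd Y₀).card :=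
      Finset.card_sdiff_add_card_inter _ _
    set E0 := ew s r
    set E1 := ew s (r+1)
    set E2 := ew s (r+2)
    set y := Y₀.card
    set p := ((bnd Y₀) \ Z).card
    set q := ((bnd Y₀) ∩ Z).card
    set z := (bnd Z).card
    have key : (E1 * E1) * (E0 * y) ≤ (E1 * E1) * (E1 * p + E2 * z) := by
      calc (E1 * E1) * (E0 * y) = (E0 * E1) * (E1 * y) := by ring
        _ ≤ (E0 * E1) * (E2 * (bnd Y₀).card) := Nat.mul_le_mul_left _ i0
        _ = (E0 * E1) * (E2 * (p + q)) := by rw [hsplit]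
        _ = (E0 * E2) * (E1 * p) + (E1 * E2) * (E0 * q) := by ring
        _ ≤ (E1 * E1) * (E1 * p) + (E1 * E2) * (E1 * z) :=
            Nat.add_le_add (Nat.mul_le_mul_right _ iN) (Nat.mul_le_mul_left _ i3)
        _ = (E1 * E1) * (E1 * p) + (E1 * E1) * (E2 * z) := by ring
        _ = (E1 * E1) * (E1 * p + E2 * z) := by ring
    exact Nat.le_of_mul_le_mul_left key (Nat.mul_pos hpos hpos)
  · push_neg at hcard
    by_cases hr : r ≤ s.card
    · have hY0e : Y₀ = ∅ := by
        apply Finset.eq_empty_of_forall_notMem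
        intro v hv
        obtain ⟨h1, h2⟩ := hY₀ v hv
        have := rankV_le_card h1
        omega
      simp [hY0e]
    · push_neg at hr
      rw [ew_eq_zero hr, Nat.zero_mul]
      exact Nat.zero_le _

lemma Qstep_succ {s : Finset (Fin n)} (hs : ∀ i ∈ s, 0 < i.1)
    (IH : ∀ (r : ℕ) (Y : Finset (V n)), (∀ v ∈ Y, suppV v ⊆ s ∧ rankV v = r + 1) →
      ew s r * Y.card ≤ ew s (r+1) * (bnd Y).card)
    (r w : ℕ) (Y₀ Z : Finset (V n))
    (hY₀ : ∀ v ∈ Y₀, suppV v ⊆ s ∧ rankV v = r + 2)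
    (hZ : ∀ z ∈ Z, suppV z ⊆ s ∧ rankV z = r + 1) :
    (ew s (r+1) + w * ew s r) * (Y₀.card + w * Z.card) ≤
      (ew s (r+2) + w * ew s (r+1)) * (((bnd Y₀) ∪ Z).card + w * (bnd Z).card) := by
  classical
  have ha : ew s (r+1) * Y₀.card ≤ ew s (r+2) * ((bnd Y₀) ∪ Z).card :=
    (IH (r+1) Y₀ hY₀).trans (Nat.mul_le_mul_left _ (Finset.card_le_card Finset.subset_union_left))
  have hc : ew s r * Z.card ≤ ew s (r+1) * (bnd Z).card := IH r Z hZ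
  have hX := Xstep hs IH r Y₀ Z hY₀ hZ
  have hsum : ((bnd Y₀) \ Z).card + Z.card = ((bnd Y₀) ∪ Z).card :=
    Finset.card_sdiff_add_card _ _
  have hb : ew s r * Y₀.card + ew s (r+1) * Z.card ≤
      ew s (r+1) * ((bnd Y₀) ∪ Z).card + ew s (r+2) * (bnd Z).card := by
    rw [← hsum, Nat.mul_add]
    omega
  nlinarith [mul_le_mul_right hb w, mul_le_mul_right hc (w*w), ha, Nat.zero_le w]

lemma Qstep_zero {s : Finset (Fin n)} (hs : ∀ i ∈ s, 0 < i.1)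
    {w : ℕ} (hw : 0 < w) (Y₀ Z : Finset (V n))
    (hY₀ : ∀ v ∈ Y₀, suppV v ⊆ s ∧ rankV v = 1)
    (hZ : ∀ z ∈ Z, suppV z ⊆ s ∧ rankV z = 0) :
    1 * (Y₀.card + w * Z.card) ≤
      (ew s 1 + w * 1) * (((bnd Y₀) ∪ Z).card + w * (bnd Z).card) := by
  classical
  have hY0le : Y₀.card ≤ ew s 1 := by
    rw [← count_rank s 1]
    apply Finset.card_le_card
    intro v hv
    simp only [Finset.mem_filter, Finset.mem_univ, true_and]
    exact hY₀ v hv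
  have hZle : Z.card ≤ 1 := by
    apply Finset.card_le_one.2
    intro z hz z' hz'
    exact eq_of_rankV_eq_zero (hZ z hz).2 (hZ z' hz').2
  rcases Finset.eq_empty_or_nonempty Y₀ with hY0e | ⟨v, hv⟩
  · rcases Finset.eq_empty_or_nonempty Z with hZe | hZne
    · simp [hY0e, hZe]
    · have hU : 0 < ((bnd Y₀) ∪ Z).card := by
        rw [Finset.card_pos]
        exact hZne.mono Finset.subset_union_right
      have h1 : Y₀.card + w * Z.card ≤ ew s 1 + w * 1 := by
        have : w * Z.card ≤ w * 1 := Nat.mul_le_mul_left w hZle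
        omega
      calc 1 * (Y₀.card + w * Z.card) = (Y₀.card + w * Z.card) * 1 := by ring
        _ ≤ (ew s 1 + w * 1) * (((bnd Y₀) ∪ Z).card + w * (bnd Z).card) := by
            apply Nat.mul_le_mul h1
            omega
  · have hU : 0 < ((bnd Y₀) ∪ Z).card := by
      rw [Finset.card_pos]
      obtain ⟨h1, h2⟩ := hY₀ v hv
      have : 0 < (suppV v).card := by rw [← rankV] at *; omega
      obtain ⟨i, hi⟩ := Finset.card_pos.1 this
      refine ⟨dropV v i, Finset.mem_union_left _ ?_⟩
      exact mem_bnd.2 ⟨v, hv, i, hi, rfl⟩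
    have h1 : Y₀.card + w * Z.card ≤ ew s 1 + w * 1 := by
      have : w * Z.card ≤ w * 1 := Nat.mul_le_mul_left w hZle
      omega
    calc 1 * (Y₀.card + w * Z.card) = (Y₀.card + w * Z.card) * 1 := by ring
      _ ≤ (ew s 1 + w * 1) * (((bnd Y₀) ∪ Z).card + w * (bnd Z).card) := by
          apply Nat.mul_le_mul h1
          omega

end NMInduction


theorem colored_NM : ∀ (A : Finset (Fin n)), (∀ i ∈ A, 0 < i.1) →
    ∀ (r : ℕ) (Y : Finset (V n)),
    (∀ v ∈ Y, suppV v ⊆ A ∧ rankV v = r + 1) →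
    ew A r * Y.card ≤ ew A (r+1) * (bnd Y).card := by
  classical
  intro A
  induction A using Finset.induction_on with
  | empty =>
    intro _ r Y hY
    have hYe : Y = ∅ := by
      apply Finset.eq_empty_of_forall_notMem
      intro v hv
      obtain ⟨h1, h2⟩ := hY v hv
      have h3 := rankV_le_card h1
      simp only [Finset.card_empty] at h3
      omega
    simp [hYe]
  | @insert a s ha IH =>
    intro hA r Y hY
    have hs : ∀ i ∈ s, 0 < i.1 := fun i hi => hA i (Finset.mem_insert_of_mem hi)
    have IHs := IH hs
    have hw : 0 < a.1 := hA a (Finset.mem_insert_self a s)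
    set A' := insert a s with hA'def
    set w := a.1 with hwdef
    set L : Fin (a.1 + 1) := Fin.last a.1 with hLdef
    set C : Finset (Fin (a.1 + 1)) := Finset.univ.erase L with hCdef
    have hCcard : C.card = w := by
      rw [hCdef, Finset.card_erase_of_mem (Finset.mem_univ L), Finset.card_univ,
        Fintype.card_fin]
      omega
    set Y₀ := Y.filter (fun v => v a = L) with hY₀def
    set Yc : Fin (a.1 + 1) → Finset (V n) :=
      fun c => (Y.filter (fun v => v a = c)).image (fun v => dropV v a) with hYcdef
    have hY₀spec : ∀ v ∈ Y₀, suppV v ⊆ s ∧ rankV v = r + 1 := by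
      intro v hv
      rw [hY₀def, Finset.mem_filter] at hv
      obtain ⟨hvY, hva⟩ := hv
      refine ⟨?_, (hY v hvY).2⟩
      intro i hi
      rcases Finset.mem_insert.1 ((hY v hvY).1 hi) with rfl | h
      · exact absurd hva (mem_suppV.1 hi)
      · exact h
    have hYcspec : ∀ c ∈ C, ∀ z ∈ Yc c, suppV z ⊆ s ∧ rankV z = r := by
      intro c hc z hz
      rw [hYcdef] at hz
      simp only [Finset.mem_image, Finset.mem_filter] at hz
      obtain ⟨v, ⟨hvY, hva⟩, rfl⟩ := hz
      have hcL : c ≠ L := (Finset.mem_erase.1 hc).1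
      have hasupp : a ∈ suppV v := mem_suppV.2 (by rw [hva]; exact hcL)
      constructor
      · intro i hi
        rw [suppV_dropV, Finset.mem_erase] at hi
        rcases Finset.mem_insert.1 ((hY v hvY).1 hi.2) with rfl | h
        · exact absurd rfl hi.1
        · exact h
      · have h1 := rankV_dropV hasupp
        have h2 := (hY v hvY).2
        omega
    have hfibercard : ∀ c ∈ C, (Yc c).card = (Y.filter (fun v => v a = c)).card := by
      intro c _
      rw [hYcdef]
      apply Finset.card_image_of_injOn
      intro v hv v' hv' heq
      rw [Finset.mem_coe, Finset.mem_filter] at hv hv'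
      funext i
      rcases eq_or_ne i a with rfl | hia
      · rw [hv.2, hv'.2]
      · have h2 : dropV v a i = dropV v' a i := congrFun heq i
        rwa [dropV_apply_ne v hia, dropV_apply_ne v' hia] at h2
    have hYsplit : Y.card = Y₀.card + ∑ c ∈ C, (Yc c).card := by
      have h1 : Y.card = ∑ c ∈ (Finset.univ : Finset (Fin (a.1+1))),
          (Y.filter (fun v => v a = c)).card :=
        Finset.card_eq_sum_card_fiberwise (fun v _ => Finset.mem_univ _)
      rw [h1, ← Finset.add_sum_erase _ _ (Finset.mem_univ L)]
      congr 1
      exact Finset.sum_congr rfl (fun c hc => (hfibercard c hc).symm)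
    set T := (bnd Y).filter (fun u => u a = L) with hTdef
    have hbndsplit : (bnd Y).card =
        T.card + ∑ c ∈ C, ((bnd Y).filter (fun u => u a = c)).card := by
      have h1 : (bnd Y).card = ∑ c ∈ (Finset.univ : Finset (Fin (a.1+1))),
          ((bnd Y).filter (fun u => u a = c)).card :=
        Finset.card_eq_sum_card_fiberwise (fun v _ => Finset.mem_univ _)
      rw [h1, ← Finset.add_sum_erase _ _ (Finset.mem_univ L)]
    have hUnion : ∀ c ∈ C, ((bnd Y₀) ∪ Yc c) ⊆ T := by
      intro c hc
      apply Finset.union_subset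
      · intro u hu
        obtain ⟨v, hv, i, hi, rfl⟩ := mem_bnd.1 hu
        rw [hY₀def, Finset.mem_filter] at hv
        have hia : i ≠ a := by
          intro h
          subst h
          exact (mem_suppV.1 hi) hv.2
        rw [hTdef, Finset.mem_filter]
        constructor
        · exact mem_bnd.2 ⟨v, hv.1, i, hi, rfl⟩
        · rw [dropV_apply_ne v (Ne.symm hia)]
          exact hv.2
      · intro z hz
        rw [hYcdef] at hz
        simp only [Finset.mem_image, Finset.mem_filter] at hz
        obtain ⟨v, ⟨hvY, hva⟩, rfl⟩ := hz
        have hcL : c ≠ L := (Finset.mem_erase.1 hc).1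
        have hasupp : a ∈ suppV v := mem_suppV.2 (by rw [hva]; exact hcL)
        rw [hTdef, Finset.mem_filter]
        exact ⟨mem_bnd.2 ⟨v, hvY, a, hasupp, rfl⟩, dropV_apply_self v a⟩
    have hColor : ∀ c ∈ C, (bnd (Yc c)).card ≤
        ((bnd Y).filter (fun u => u a = c)).card := by
      intro c hc
      have hcL : c ≠ L := (Finset.mem_erase.1 hc).1
      have haL : ∀ u ∈ bnd (Yc c), u a = L := by
        intro u hu
        obtain ⟨z, hz, j, hj, rfl⟩ := mem_bnd.1 hu
        rw [hYcdef] at hz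
        simp only [Finset.mem_image, Finset.mem_filter] at hz
        obtain ⟨v, ⟨hvY, hva⟩, rfl⟩ := hz
        have hja : j ≠ a := by
          rw [suppV_dropV] at hj
          exact (Finset.mem_erase.1 hj).1
        rw [dropV_apply_ne _ (fun h => hja h.symm), dropV_apply_self]
      apply Finset.card_le_card_of_injOn (fun u => Function.update u a c)
      · intro u hu
        obtain ⟨z, hz, j, hj, rfl⟩ := mem_bnd.1 hu
        rw [hYcdef] at hz
        simp only [Finset.mem_image, Finset.mem_filter] at hz
        obtain ⟨v, ⟨hvY, hva⟩, rfl⟩ := hz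
        rw [suppV_dropV, Finset.mem_erase] at hj
        obtain ⟨hja, hjv⟩ := hj
        have hkey : Function.update (dropV (dropV v a) j) a c = dropV v j := by
          funext x
          rcases eq_or_ne x a with rfl | hxa
          · rw [Function.update_self, dropV_apply_ne v (fun h => hja h.symm), hva]
          · rw [Function.update_of_ne hxa]
            rcases eq_or_ne x j with rfl | hxj
            · rw [dropV_apply_self, dropV_apply_self]
            · rw [dropV_apply_ne _ hxj, dropV_apply_ne _ hxa, dropV_apply_ne _ hxj]
        beta_reduce
        rw [hkey, Finset.mem_coe, Finset.mem_filter]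
        constructor
        · exact mem_bnd.2 ⟨v, hvY, j, hjv, rfl⟩
        · rw [dropV_apply_ne v (fun h => hja h.symm)]
          exact hva
      · intro u hu u' hu' heq
        funext x
        rcases eq_or_ne x a with rfl | hxa
        · rw [haL u (Finset.mem_coe.1 hu), haL u' (Finset.mem_coe.1 hu')]
        · have h2 : Function.update u a c x = Function.update u' a c x := congrFun heq x
          rwa [Function.update_of_ne hxa, Function.update_of_ne hxa] at h2
    have hper : ∀ c ∈ C, ew A' r * (Y₀.card + w * (Yc c).card) ≤
        ew A' (r+1) * (((bnd Y₀) ∪ Yc c).card + w * (bnd (Yc c)).card) := by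
      intro c hc
      have hzc := hYcspec c hc
      match r with
      | 0 =>
        have e1 : ew A' 0 = 1 := ew_zero A'
        have e2 : ew A' 1 = ew s 1 + w * 1 := by
          rw [hA'def, ew_insert ha 0, ew_zero]
        rw [e1, e2]
        exact Qstep_zero hs hw Y₀ (Yc c) hY₀spec hzc
      | (r+1) =>
        have e1 : ew A' (r+1) = ew s (r+1) + w * ew s r := by
          rw [hA'def, ew_insert ha r]
        have e2 : ew A' (r+2) = ew s (r+2) + w * ew s (r+1) := by
          rw [hA'def, ew_insert ha (r+1)]
        rw [e1, e2]
        exact Qstep_succ hs IHs r w Y₀ (Yc c) hY₀spec hzc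
    have lhs_eq : w * (ew A' r * Y.card) =
        ∑ c ∈ C, ew A' r * (Y₀.card + w * (Yc c).card) := by
      rw [hYsplit]
      rw [Finset.sum_congr rfl
        (fun c _ => (Nat.mul_add (ew A' r) Y₀.card (w * (Yc c).card) : _))]
      rw [Finset.sum_add_distrib, Finset.sum_const, smul_eq_mul, hCcard]
      have hms : ∑ c ∈ C, ew A' r * (w * (Yc c).card)
          = ew A' r * (w * ∑ c ∈ C, (Yc c).card) := by
        calc ∑ c ∈ C, ew A' r * (w * (Yc c).card)
            = ∑ c ∈ C, (ew A' r * w) * (Yc c).card :=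
              Finset.sum_congr rfl (fun c _ => by ring)
          _ = (ew A' r * w) * ∑ c ∈ C, (Yc c).card := (Finset.mul_sum _ _ _).symm
          _ = ew A' r * (w * ∑ c ∈ C, (Yc c).card) := by ring
      rw [hms]
      ring
    have rhs_le : ∑ c ∈ C, ew A' (r+1) * (((bnd Y₀) ∪ Yc c).card + w * (bnd (Yc c)).card) ≤
        w * (ew A' (r+1) * (bnd Y).card) := by
      have step1 : ∀ c ∈ C,
          ew A' (r+1) * (((bnd Y₀) ∪ Yc c).card + w * (bnd (Yc c)).card) ≤
          ew A' (r+1) * (T.card + w * ((bnd Y).filter (fun u => u a = c)).card) := by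
        intro c hc
        apply Nat.mul_le_mul_left
        exact Nat.add_le_add (Finset.card_le_card (hUnion c hc))
          (Nat.mul_le_mul_left w (hColor c hc))
      calc ∑ c ∈ C, ew A' (r+1) * (((bnd Y₀) ∪ Yc c).card + w * (bnd (Yc c)).card)
          ≤ ∑ c ∈ C, ew A' (r+1) * (T.card + w * ((bnd Y).filter (fun u => u a = c)).card) :=
            Finset.sum_le_sum step1
        _ = w * (ew A' (r+1) * (bnd Y).card) := by
            rw [Finset.sum_congr rfl (fun c _ =>
              (Nat.mul_add (ew A' (r+1)) T.card (w * ((bnd Y).filter (fun u => u a = c)).card) : _))]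
            rw [Finset.sum_add_distrib, Finset.sum_const, smul_eq_mul, hCcard]
            have h2 : ∑ c ∈ C, ew A' (r+1) * (w * ((bnd Y).filter (fun u => u a = c)).card)
                = ew A' (r+1) * (w * ∑ c ∈ C, ((bnd Y).filter (fun u => u a = c)).card) := by
              calc ∑ c ∈ C, ew A' (r+1) * (w * ((bnd Y).filter (fun u => u a = c)).card)
                  = ∑ c ∈ C, (ew A' (r+1) * w) * ((bnd Y).filter (fun u => u a = c)).card :=
                    Finset.sum_congr rfl (fun c _ => by ring)
                _ = (ew A' (r+1) * w) * ∑ c ∈ C, ((bnd Y).filter (fun u => u a = c)).card :=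
                    (Finset.mul_sum _ _ _).symm
                _ = ew A' (r+1) * (w * ∑ c ∈ C, ((bnd Y).filter (fun u => u a = c)).card) := by
                    ring
            rw [h2, hbndsplit]
            ring
    have main : w * (ew A' r * Y.card) ≤ w * (ew A' (r+1) * (bnd Y).card) :=
      lhs_eq ▸ ((Finset.sum_le_sum hper).trans rhs_le)
    exact Nat.le_of_mul_le_mul_left main hw


section PermSide
open Equiv

def cycleCount' {n : ℕ} (π : Equiv.Perm (Fin n)) : ℕ :=
  π.cycleType.card + (Finset.univ.filter fun x => π x = x).card

variable {n : ℕ}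

def facP (v : V n) (i : Fin n) : Equiv.Perm (Fin n) :=
  if _ : v i = Fin.last i.1 then 1
  else Equiv.swap ⟨(v i).1, lt_of_le_of_lt (Nat.le_of_lt_succ (v i).isLt) i.isLt⟩ i

def ppP (v : V n) : ℕ → Equiv.Perm (Fin n)
  | 0 => 1
  | k+1 => ppP v k * (if h : k < n then facP v ⟨k, h⟩ else 1)

def FP (v : V n) : Equiv.Perm (Fin n) := ppP v n

lemma facP_top {v : V n} {i : Fin n} (h : v i = Fin.last i.1) : facP v i = 1 :=
  dif_pos h

lemma facP_swap {v : V n} {i : Fin n} (h : v i ≠ Fin.last i.1) :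
    facP v i = Equiv.swap ⟨(v i).1, lt_of_le_of_lt (Nat.le_of_lt_succ (v i).isLt) i.isLt⟩ i :=
  dif_neg h

lemma vlt_of_ne_top {v : V n} {i : Fin n} (h : v i ≠ Fin.last i.1) : (v i).1 < i.1 := by
  have h1 : (v i).1 ≤ i.1 := Nat.le_of_lt_succ (v i).isLt
  rcases Nat.lt_or_ge (v i).1 i.1 with h2 | h2
  · exact h2
  · exfalso
    apply h
    apply Fin.ext
    simp [Fin.last]
    omega

lemma facP_apply_of_gt {v : V n} {i z : Fin n} (h : i.1 < z.1) : facP v i z = z := by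
  by_cases htop : v i = Fin.last i.1
  · rw [facP_top htop]; rfl
  · rw [facP_swap htop]
    apply Equiv.swap_apply_of_ne_of_ne
    · intro he
      have h2 := vlt_of_ne_top htop
      have h3 : z.1 = (v i).1 := congrArg Fin.val he
      omega
    · intro he
      have h3 : z.1 = i.1 := congrArg Fin.val he
      omega

lemma ppP_apply_of_le (v : V n) : ∀ k, ∀ z : Fin n, k ≤ z.1 → ppP v k z = z := by
  intro k
  induction k with
  | zero => intro z _; rfl
  | succ k IH =>
    intro z hz
    show (ppP v k * _) z = z
    rw [Equiv.Perm.mul_apply]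
    by_cases hk : k < n
    · rw [dif_pos hk, facP_apply_of_gt (show k < z.1 by omega)]
      exact IH z (by omega)
    · rw [dif_neg hk]
      exact IH z (by omega)

lemma ppP_apply_lt (v : V n) : ∀ k, ∀ z : Fin n, z.1 < k → (ppP v k z).1 < k := by
  intro k z hz
  by_contra hcon
  push_neg at hcon
  have h1 : ppP v k (ppP v k z) = ppP v k z := ppP_apply_of_le v k _ hcon
  have h2 : ppP v k z = z := (ppP v k).injective h1
  omega

lemma ppP_inj : ∀ k, ∀ v w : V n, ppP v k = ppP w k → ∀ i : Fin n, i.1 < k → v i = w i := by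
  intro k
  induction k with
  | zero => intro v w _ i hi; omega
  | succ k IH =>
    intro v w h i hi
    by_cases hk : k < n
    · have hsv : ppP v (k+1) = ppP v k * facP v ⟨k, hk⟩ := by
        show ppP v k * _ = _
        rw [dif_pos hk]
      have hsw : ppP w (k+1) = ppP w k * facP w ⟨k, hk⟩ := by
        show ppP w k * _ = _
        rw [dif_pos hk]
      set a : Fin n := ⟨k, hk⟩ with hadef
      have haval : a.1 = k := rfl
      have key : ppP v k = ppP w k ∧ v a = w a := by
        rcases eq_or_ne (v a) (Fin.last a.1) with hva | hva <;>
          rcases eq_or_ne (w a) (Fin.last a.1) with hwa | hwa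
        · rw [hsv, hsw, facP_top hva, facP_top hwa, mul_one, mul_one] at h
          exact ⟨h, by rw [hva, hwa]⟩
        · exfalso
          set jw : Fin n := ⟨(w a).1, lt_of_le_of_lt (Nat.le_of_lt_succ (w a).isLt) a.isLt⟩
            with hjw
          have hval : ppP v (k+1) a = ppP w (k+1) a := by rw [h]
          rw [hsv, hsw] at hval
          rw [Equiv.Perm.mul_apply, Equiv.Perm.mul_apply, facP_top hva,
            facP_swap hwa] at hval
          rw [Equiv.Perm.one_apply, Equiv.swap_apply_right] at hval
          rw [ppP_apply_of_le v k a (le_refl k)] at hval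
          have hjwlt : jw.1 < k := by
            have h8 := vlt_of_ne_top hwa
            have h9 : (jw : ℕ) = (w a).1 := rfl
            omega
          have hlt := ppP_apply_lt w k jw hjwlt
          have hval' : (k : ℕ) = ((ppP w k) jw).1 := by
            have h9 := congrArg Fin.val hval
            simpa using h9
          omega
        · exfalso
          set jv : Fin n := ⟨(v a).1, lt_of_le_of_lt (Nat.le_of_lt_succ (v a).isLt) a.isLt⟩
            with hjv
          have hval : ppP v (k+1) a = ppP w (k+1) a := by rw [h]
          rw [hsv, hsw] at hval
          rw [Equiv.Perm.mul_apply, Equiv.Perm.mul_apply, facP_top hwa,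
            facP_swap hva] at hval
          rw [Equiv.Perm.one_apply, Equiv.swap_apply_right] at hval
          rw [ppP_apply_of_le w k a (le_refl k)] at hval
          have hjvlt : jv.1 < k := by
            have h8 := vlt_of_ne_top hva
            have h9 : (jv : ℕ) = (v a).1 := rfl
            omega
          have hlt := ppP_apply_lt v k jv hjvlt
          have hval' : ((ppP v k) jv).1 = (k : ℕ) := by
            have h9 := congrArg Fin.val hval
            simpa using h9
          omega
        · -- both nontrivial
          set jv : Fin n := ⟨(v a).1, lt_of_le_of_lt (Nat.le_of_lt_succ (v a).isLt) a.isLt⟩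
            with hjv
          set jw : Fin n := ⟨(w a).1, lt_of_le_of_lt (Nat.le_of_lt_succ (w a).isLt) a.isLt⟩
            with hjw
          have hjva : jv ≠ a := by
            have h5 := vlt_of_ne_top hva
            intro hc
            have h6 : jv.1 = a.1 := congrArg Fin.val hc
            have h7 : jv.1 = (v a).1 := rfl
            omega
          have hjwa : jw ≠ a := by
            have h5 := vlt_of_ne_top hwa
            intro hc
            have h6 : jw.1 = a.1 := congrArg Fin.val hc
            have h7 : jw.1 = (w a).1 := rfl
            omega
          have heq2 : (ppP w k)⁻¹ * ppP v k = Equiv.swap jw a * (Equiv.swap jv a)⁻¹ := by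
            rw [hsv, hsw, facP_swap hva, facP_swap hwa] at h
            rw [← hjv, ← hjw] at h
            have := mul_inv_eq_iff_eq_mul.2 h
            rw [mul_assoc] at this
            calc (ppP w k)⁻¹ * ppP v k
                = (ppP w k)⁻¹ * (ppP v k * Equiv.swap jv a * (Equiv.swap jv a)⁻¹) := by
                  rw [mul_inv_cancel_right]
              _ = (ppP w k)⁻¹ * (ppP w k * Equiv.swap jw a * (Equiv.swap jv a)⁻¹) := by
                  rw [h]
              _ = Equiv.swap jw a * (Equiv.swap jv a)⁻¹ := by group
          have hjvjw : jv = jw := by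
            by_contra hne
            have hval : ((ppP w k)⁻¹ * ppP v k) a = (Equiv.swap jw a * (Equiv.swap jv a)⁻¹) a := by
              rw [heq2]
            have hl : ((ppP w k)⁻¹ * ppP v k) a = a := by
              rw [Equiv.Perm.mul_apply, ppP_apply_of_le v k a (le_refl k)]
              have : ppP w k a = a := ppP_apply_of_le w k a (le_refl k)
              calc (ppP w k)⁻¹ a = (ppP w k)⁻¹ (ppP w k a) := by rw [this]
                _ = a := Equiv.symm_apply_apply _ _
            have hr : (Equiv.swap jw a * (Equiv.swap jv a)⁻¹) a = jv := by
              rw [Equiv.Perm.mul_apply]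
              rw [Equiv.swap_inv, Equiv.swap_apply_right]
              exact Equiv.swap_apply_of_ne_of_ne hne hjva
            rw [hval, hr] at hl
            exact hjva hl
          have hvwa : v a = w a := by
            apply Fin.ext
            have := congrArg Fin.val hjvjw
            simpa [hjv, hjw] using this
          have hpp : ppP v k = ppP w k := by
            rw [hsv, hsw, facP_swap hva, facP_swap hwa, ← hjv, ← hjw, hjvjw] at h
            exact mul_right_cancel h
          exact ⟨hpp, hvwa⟩
      rcases Nat.lt_or_ge i.1 k with hik | hik
      · exact IH v w key.1 i hik
      · have : i = a := Fin.ext (by simp [hadef]; omega)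
        rw [this]
        exact key.2
    · have hsv : ppP v (k+1) = ppP v k := by
        show ppP v k * _ = _
        rw [dif_neg hk, mul_one]
      have hsw : ppP w (k+1) = ppP w k := by
        show ppP w k * _ = _
        rw [dif_neg hk, mul_one]
      rw [hsv, hsw] at h
      have : i.1 < k := by have := i.isLt; omega
      exact IH v w h i this

lemma FP_injective : Function.Injective (FP (n := n)) := by
  intro v w h
  funext i
  exact ppP_inj n v w h i i.isLt

lemma FP_bijective : Function.Bijective (FP (n := n)) := by
  rw [Fintype.bijective_iff_injective_and_card]
  refine ⟨FP_injective, ?_⟩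
  rw [Fintype.card_pi, Fintype.card_perm, Fintype.card_fin]
  have h1 : ∀ i : Fin n, Fintype.card (Fin (i.1+1)) = i.1 + 1 := fun i => Fintype.card_fin _
  rw [Finset.prod_congr rfl (fun i _ => h1 i)]
  rw [Fin.prod_univ_eq_prod_range (fun i => i + 1) n]
  exact Finset.prod_range_add_one_eq_factorial n

end PermSide


section CycleSide
open Equiv

variable {n : ℕ}

lemma fix_card (π : Equiv.Perm (Fin n)) :
    (Finset.univ.filter fun x => π x = x).card + π.support.card = n := by
  classical
  have h1 : π.support = Finset.univ.filter (fun x => ¬ (π x = x)) := by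
    ext x
    simp [Equiv.Perm.mem_support]
  rw [h1]
  rw [Finset.card_filter_add_card_filter_not]
  simp

lemma isCycle_merge {c : Equiv.Perm (Fin n)} (hc : c.IsCycle) {x y : Fin n} (hxy : x ≠ y)
    (hy : c y ≠ y) (hx : c x = x) : (c * Equiv.swap x y).IsCycle := by
  set g := c * Equiv.swap x y with hg
  have hgy : g y = x := by
    rw [hg, Equiv.Perm.mul_apply, Equiv.swap_apply_right, hx]
  have hgx : g x = c y := by
    rw [hg, Equiv.Perm.mul_apply, Equiv.swap_apply_left]
  have hgz : ∀ z, z ≠ x → z ≠ y → g z = c z := by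
    intro z h1 h2
    rw [hg, Equiv.Perm.mul_apply, Equiv.swap_apply_of_ne_of_ne h1 h2]
  have hpow : ∀ m : ℕ, g.SameCycle y ((c ^ m) y) := by
    intro m
    induction m with
    | zero => exact Equiv.Perm.SameCycle.refl g y
    | succ m IHm =>
      have hstep : (c ^ (m+1)) y = c ((c ^ m) y) := by
        rw [pow_succ', Equiv.Perm.mul_apply]
      rcases eq_or_ne ((c ^ m) y) y with he | hne
      · have h2 : (c ^ (m+1)) y = g (g y) := by
          rw [hstep, he, hgy, hgx]
        rw [h2]
        exact (Equiv.Perm.sameCycle_apply_right.2 (Equiv.Perm.sameCycle_apply_right.2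
          (Equiv.Perm.SameCycle.refl g y)))
      · have hzx : (c ^ m) y ≠ x := by
          intro hcon
          have hmem : (c ^ m) y ∈ c.support :=
            Equiv.Perm.pow_apply_mem_support.2 (Equiv.Perm.mem_support.2 hy)
          rw [hcon, Equiv.Perm.mem_support] at hmem
          exact hmem hx
        have h2 : (c ^ (m+1)) y = g ((c ^ m) y) := by
          rw [hstep, hgz _ hzx hne]
        rw [h2]
        exact Equiv.Perm.sameCycle_apply_right.2 IHm
  refine ⟨y, by rw [hgy]; exact fun hcon => hxy hcon, ?_⟩
  intro z hz
  rcases eq_or_ne z y with rfl | hzy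
  · exact Equiv.Perm.SameCycle.refl g z
  rcases eq_or_ne z x with rfl | hzx
  · exact ⟨1, by simpa using hgy⟩
  · have hcz : c z ≠ z := by
      intro hfix
      apply hz
      rw [hgz z hzx hzy, hfix]
    obtain ⟨m, -, -, hm⟩ := (hc.sameCycle hy hcz).exists_pow_eq c
    rw [← hm]
    exact hpow m

lemma merge_support {c : Equiv.Perm (Fin n)} {x y : Fin n} (hy : c y ≠ y) (hx : c x = x) :
    (c * Equiv.swap x y).support ⊆ insert x c.support := by
  intro z hz
  rw [Equiv.Perm.mem_support] at hz
  by_cases h1 : z = x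
  · rw [h1]; exact Finset.mem_insert_self x _
  by_cases h2 : z = y
  · subst h2
    exact Finset.mem_insert_of_mem (Equiv.Perm.mem_support.2 hy)
  · apply Finset.mem_insert_of_mem
    rw [Equiv.Perm.mem_support]
    intro hfix
    apply hz
    rw [Equiv.Perm.mul_apply, Equiv.swap_apply_of_ne_of_ne h1 h2, hfix]

end CycleSide


section CCStar
open Equiv

variable {n : ℕ}

lemma ccStar {u : Equiv.Perm (Fin n)} {x y : Fin n} (hx : u x = x) (hxy : y ≠ x) :
    cycleCount (u * Equiv.swap x y) + 1 = cycleCount u := by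
  classical
  have hxy' : x ≠ y := fun h => hxy h.symm
  by_cases hy : u y = y
  · -- disjoint case
    have hd : u.Disjoint (Equiv.swap x y) := by
      intro z
      by_cases h1 : z = x
      · left; rw [h1, hx]
      · by_cases h2 : z = y
        · left; rw [h2, hy]
        · right; exact Equiv.swap_apply_of_ne_of_ne h1 h2
    have hct : (u * Equiv.swap x y).cycleType = u.cycleType + (Equiv.swap x y).cycleType :=
      hd.cycleType_mul
    have hswapcard : (Equiv.swap x y).cycleType.card = 1 := by
      rw [(Equiv.Perm.isCycle_swap hxy').cycleType]
      simp
    have hfixeq : (Finset.univ.filter fun z => (u * Equiv.swap x y) z = z)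
        = (Finset.univ.filter fun z => u z = z) \ {x, y} := by
      ext z
      simp only [Finset.mem_filter, Finset.mem_univ, true_and, Finset.mem_sdiff,
        Finset.mem_insert, Finset.mem_singleton]
      constructor
      · intro hfz
        by_cases h1 : z = x
        · exfalso
          rw [h1, Equiv.Perm.mul_apply, Equiv.swap_apply_left, hy] at hfz
          exact hxy hfz
        · by_cases h2 : z = y
          · exfalso
            rw [h2, Equiv.Perm.mul_apply, Equiv.swap_apply_right, hx] at hfz
            exact hxy hfz.symm
          · rw [Equiv.Perm.mul_apply, Equiv.swap_apply_of_ne_of_ne h1 h2] at hfz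
            exact ⟨hfz, fun hcon => hcon.elim h1 h2⟩
      · rintro ⟨h1, h2⟩
        push_neg at h2
        rw [Equiv.Perm.mul_apply, Equiv.swap_apply_of_ne_of_ne h2.1 h2.2, h1]
    have hsub : ({x, y} : Finset (Fin n)) ⊆ Finset.univ.filter fun z => u z = z := by
      intro z hz
      rcases Finset.mem_insert.1 hz with rfl | hz'
      · simp [hx]
      · rw [Finset.mem_singleton] at hz'
        subst hz'
        simp [hy]
    have hcard2 : ({x, y} : Finset (Fin n)).card = 2 := Finset.card_pair hxy'
    have hge2 : 2 ≤ (Finset.univ.filter fun z => u z = z).card := by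
      rw [← hcard2]
      exact Finset.card_le_card hsub
    unfold cycleCount
    rw [hct, Multiset.card_add, hswapcard, hfixeq, Finset.card_sdiff_of_subset hsub, hcard2]
    omega
  · -- y is moved by u
    set c := u.cycleOf y with hcdef
    have hcyc : c.IsCycle := Equiv.Perm.isCycle_cycleOf u hy
    have hcy : c y = u y := Equiv.Perm.cycleOf_apply_self u y
    have happly : ∀ z, u.SameCycle y z → c z = u z := fun z h => h.cycleOf_apply
    have hnot : ∀ z, ¬ u.SameCycle y z → c z = z := by
      intro z hz
      rw [hcdef, Equiv.Perm.cycleOf_apply, if_neg hz]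
    have hcx : c x = x := by
      by_cases hsc : u.SameCycle y x
      · rw [happly x hsc, hx]
      · exact hnot x hsc
    set v := c⁻¹ * u with hvdef
    have hvz1 : ∀ z, u.SameCycle y z → v z = z := by
      intro z h
      rw [hvdef, Equiv.Perm.mul_apply]
      rw [← happly z h]; exact c.symm_apply_apply z
    have huz_not : ∀ z, ¬ u.SameCycle y z → c (u z) = u z := by
      intro z h
      apply hnot
      intro hcon
      exact h (Equiv.Perm.sameCycle_apply_right.1 hcon)
    have hvz2 : ∀ z, ¬ u.SameCycle y z → v z = u z := by
      intro z h
      rw [hvdef, Equiv.Perm.mul_apply]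
      calc c⁻¹ (u z) = c⁻¹ (c (u z)) := by rw [huz_not z h]
        _ = u z := Equiv.symm_apply_apply _ _
    have hu_eq : u = c * v := by rw [hvdef]; group
    have hdisj_cv : c.Disjoint v := by
      intro z
      by_cases h : u.SameCycle y z
      · right; exact hvz1 z h
      · left; exact hnot z h
    have hvx : v x = x := by
      by_cases h : u.SameCycle y x
      · exact hvz1 x h
      · rw [hvz2 x h, hx]
    have hvy : v y = y := hvz1 y (Equiv.Perm.SameCycle.refl u y)
    have hdisj_vt : v.Disjoint (Equiv.swap x y) := by
      intro z
      by_cases h1 : z = x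
      · left; rw [h1, hvx]
      · by_cases h2 : z = y
        · left; rw [h2, hvy]
        · right; exact Equiv.swap_apply_of_ne_of_ne h1 h2
    set g := c * Equiv.swap x y with hgdef
    have hcyne : c y ≠ y := by rw [hcy]; exact hy
    have hgcyc : g.IsCycle := isCycle_merge hcyc hxy' hcyne hcx
    have hfact : u * Equiv.swap x y = g * v := by
      have h1 : g * v = c * (Equiv.swap x y * v) := by rw [hgdef, mul_assoc]
      have h2 : Equiv.swap x y * v = v * Equiv.swap x y := ((hdisj_vt.commute).symm).eq
      rw [h1, h2, ← mul_assoc, ← hu_eq]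
    have hdisj_gv : g.Disjoint v := by
      intro z
      by_cases hzx : z = x
      · right; rw [hzx, hvx]
      · by_cases hzc : z ∈ c.support
        · right
          apply hvz1
          exact (Equiv.Perm.mem_support_cycleOf_iff.1 hzc).1
        · left
          have hnotin : z ∉ g.support := by
            intro hmem
            rcases Finset.mem_insert.1 (merge_support hcyne hcx hmem) with h | h
            · exact hzx h
            · exact hzc h
          exact Equiv.Perm.notMem_support.1 hnotin
    have hctu : u.cycleType = c.cycleType + v.cycleType := by
      rw [hu_eq]
      exact hdisj_cv.cycleType_mul
    have hctw : (u * Equiv.swap x y).cycleType = g.cycleType + v.cycleType := by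
      rw [hfact]
      exact hdisj_gv.cycleType_mul
    have hccard : c.cycleType.card = 1 := by rw [hcyc.cycleType]; simp
    have hgcard : g.cycleType.card = 1 := by rw [hgcyc.cycleType]; simp
    have hfixeq : (Finset.univ.filter fun z => (u * Equiv.swap x y) z = z)
        = (Finset.univ.filter fun z => u z = z).erase x := by
      ext z
      simp only [Finset.mem_filter, Finset.mem_univ, true_and, Finset.mem_erase]
      constructor
      · intro hfz
        by_cases h1 : z = x
        · exfalso
          rw [h1, Equiv.Perm.mul_apply, Equiv.swap_apply_left] at hfz
          have hyx : y = x := u.injective (by rw [hfz, hx])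
          exact hxy hyx
        · by_cases h2 : z = y
          · exfalso
            rw [h2, Equiv.Perm.mul_apply, Equiv.swap_apply_right, hx] at hfz
            exact hxy hfz.symm
          · rw [Equiv.Perm.mul_apply, Equiv.swap_apply_of_ne_of_ne h1 h2] at hfz
            exact ⟨h1, hfz⟩
      · rintro ⟨h1, h2⟩
        have h2' : z ≠ y := by
          rintro rfl
          exact hy h2
        rw [Equiv.Perm.mul_apply, Equiv.swap_apply_of_ne_of_ne h1 h2', h2]
    have hxfix : x ∈ Finset.univ.filter fun z => u z = z := by simp [hx]
    have hpos : 0 < (Finset.univ.filter fun z => u z = z).card :=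
      Finset.card_pos.2 ⟨x, hxfix⟩
    unfold cycleCount
    rw [hctw, hctu, Multiset.card_add, Multiset.card_add, hccard, hgcard, hfixeq,
      Finset.card_erase_of_mem hxfix]
    omega

end CCStar





section RankSide
open Equiv

variable {n : ℕ}

lemma cc_ppP (v : V n) : ∀ k,
    cycleCount (ppP v k) +
      (Finset.univ.filter (fun i : Fin n => i.1 < k ∧ v i ≠ Fin.last i.1)).card = n := by
  intro k
  induction k with
  | zero =>
    have h1 : (Finset.univ.filter (fun i : Fin n => i.1 < 0 ∧ v i ≠ Fin.last i.1)) = ∅ := by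
      apply Finset.filter_false_of_mem
      intro i _
      simp
    rw [h1, Finset.card_empty]
    show cycleCount 1 + 0 = n
    unfold cycleCount
    rw [Equiv.Perm.cycleType_one]
    simp
  | succ k IH =>
    by_cases hk : k < n
    · set a : Fin n := ⟨k, hk⟩ with hadef
      have haval : a.1 = k := rfl
      have hstep : ppP v (k+1) = ppP v k * facP v a := by
        show ppP v k * _ = _
        rw [dif_pos hk]
      by_cases hva : v a = Fin.last a.1
      · have hfeq : (Finset.univ.filter (fun i : Fin n => i.1 < k + 1 ∧ v i ≠ Fin.last i.1))
            = (Finset.univ.filter (fun i : Fin n => i.1 < k ∧ v i ≠ Fin.last i.1)) := by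
          apply Finset.filter_congr
          intro i _
          constructor
          · rintro ⟨h1, h2⟩
            rcases Nat.lt_or_ge i.1 k with h3 | h3
            · exact ⟨h3, h2⟩
            · exfalso
              have : i = a := Fin.ext (by omega)
              rw [this] at h2
              exact h2 hva
          · rintro ⟨h1, h2⟩
            exact ⟨by omega, h2⟩
        rw [hstep, facP_top hva, mul_one, hfeq]
        exact IH
      · set jv : Fin n := ⟨(v a).1, lt_of_le_of_lt (Nat.le_of_lt_succ (v a).isLt) a.isLt⟩
          with hjv
        have hfix : ppP v k a = a := ppP_apply_of_le v k a (le_refl k)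
        have hjva : jv ≠ a := by
          have h5 := vlt_of_ne_top hva
          intro hc
          have h6 : jv.1 = a.1 := congrArg Fin.val hc
          have h7 : jv.1 = (v a).1 := rfl
          omega
        have hcc := ccStar (u := ppP v k) (x := a) (y := jv) hfix hjva
        have hfeq : (Finset.univ.filter (fun i : Fin n => i.1 < k + 1 ∧ v i ≠ Fin.last i.1))
            = insert a (Finset.univ.filter (fun i : Fin n => i.1 < k ∧ v i ≠ Fin.last i.1)) := by
          ext i
          simp only [Finset.mem_filter, Finset.mem_univ, true_and, Finset.mem_insert]
          constructor
          · rintro ⟨h1, h2⟩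
            rcases Nat.lt_or_ge i.1 k with h3 | h3
            · exact Or.inr ⟨h3, h2⟩
            · exact Or.inl (Fin.ext (by omega))
          · rintro (rfl | ⟨h1, h2⟩)
            · exact ⟨by omega, hva⟩
            · exact ⟨by omega, h2⟩
        have hnotmem : a ∉ (Finset.univ.filter (fun i : Fin n => i.1 < k ∧ v i ≠ Fin.last i.1)) := by
          simp only [Finset.mem_filter, Finset.mem_univ, true_and, not_and]
          intro hcon
          exfalso
          have : a.1 = k := rfl
          omega
        rw [hfeq, Finset.card_insert_of_notMem hnotmem]
        rw [hstep, facP_swap hva, ← hjv, Equiv.swap_comm]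
        omega
    · have hstep : ppP v (k+1) = ppP v k := by
        show ppP v k * _ = _
        rw [dif_neg hk, mul_one]
      have hfeq : (Finset.univ.filter (fun i : Fin n => i.1 < k + 1 ∧ v i ≠ Fin.last i.1))
          = (Finset.univ.filter (fun i : Fin n => i.1 < k ∧ v i ≠ Fin.last i.1)) := by
        apply Finset.filter_congr
        intro i _
        have := i.isLt
        constructor
        · rintro ⟨h1, h2⟩; exact ⟨by omega, h2⟩
        · rintro ⟨h1, h2⟩; exact ⟨by omega, h2⟩
      rw [hstep, hfeq]
      exact IH

lemma cc_FP (v : V n) : cycleCount (FP v) + rankV v = n := by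
  have h := cc_ppP v n
  have hfeq : (Finset.univ.filter (fun i : Fin n => i.1 < n ∧ v i ≠ Fin.last i.1)) = suppV v := by
    apply Finset.filter_congr
    intro i _
    have := i.isLt
    constructor
    · rintro ⟨_, h2⟩; exact h2
    · intro h2; exact ⟨this, h2⟩
  rw [hfeq] at h
  exact h

lemma absLength_FP (v : V n) : absLength (FP v) = rankV v := by
  have h := cc_FP v
  unfold absLength
  omega

lemma absLength_swap {x y : Fin n} (h : x ≠ y) : absLength (Equiv.swap x y) = 1 := by
  classical
  have hct : (Equiv.swap x y).cycleType.card = 1 := by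
    rw [(Equiv.Perm.isCycle_swap h).cycleType]
    simp
  have hfix : (Finset.univ.filter fun z => Equiv.swap x y z = z)
      = Finset.univ \ {x, y} := by
    ext z
    simp only [Finset.mem_filter, Finset.mem_univ, true_and, Finset.mem_sdiff,
      Finset.mem_insert, Finset.mem_singleton]
    constructor
    · intro hz
      push_neg
      refine ⟨?_, ?_⟩
      · rintro rfl
        rw [Equiv.swap_apply_left] at hz
        exact h hz.symm
      · rintro rfl
        rw [Equiv.swap_apply_right] at hz
        exact h hz
    · intro hz
      push_neg at hz
      exact Equiv.swap_apply_of_ne_of_ne hz.1 hz.2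
  have hsub : ({x, y} : Finset (Fin n)) ⊆ Finset.univ := Finset.subset_univ _
  have hcard2 : ({x, y} : Finset (Fin n)).card = 2 := Finset.card_pair h
  have hn2 : 2 ≤ n := by
    have := Finset.card_le_card hsub
    rwa [hcard2, Finset.card_univ, Fintype.card_fin] at this
  unfold absLength cycleCount
  rw [hct, hfix, Finset.card_sdiff_of_subset hsub, hcard2, Finset.card_univ, Fintype.card_fin]
  omega

lemma facP_congr {v w : V n} {j : Fin n} (h : v j = w j) : facP v j = facP w j := by
  unfold facP
  rcases eq_or_ne (v j) (Fin.last j.1) with h1 | h1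
  · rw [dif_pos h1, dif_pos (h ▸ h1)]
  · rw [dif_neg h1, dif_neg (h ▸ h1)]
    have hval : (⟨(v j).1, lt_of_le_of_lt (Nat.le_of_lt_succ (v j).isLt) j.isLt⟩ : Fin n)
        = ⟨(w j).1, lt_of_le_of_lt (Nat.le_of_lt_succ (w j).isLt) j.isLt⟩ :=
      by rw [Fin.mk.injEq]; exact congrArg Fin.val h
    rw [hval]

lemma ppP_congr {v w : V n} : ∀ k, (∀ j : Fin n, j.1 < k → v j = w j) → ppP v k = ppP w k := by
  intro k
  induction k with
  | zero => intro _; rfl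
  | succ k IH =>
    intro hagree
    show ppP v k * _ = ppP w k * _
    rw [IH (fun j hj => hagree j (by omega))]
    by_cases hk : k < n
    · rw [dif_pos hk, dif_pos hk, facP_congr (hagree ⟨k, hk⟩ (Nat.lt_succ_self k))]
    · rw [dif_neg hk, dif_neg hk]

lemma drop_factor {v : V n} {i : Fin n} (hi : v i ≠ Fin.last i.1) :
    ∀ k, i.1 < k → ∃ T : Equiv.Perm (Fin n),
      ppP v k = ppP v i.1 * (facP v i * T) ∧ ppP (dropV v i) k = ppP v i.1 * T := by
  intro k
  induction k with
  | zero => omega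
  | succ k IHk =>
    intro hik
    rcases Nat.lt_or_ge i.1 k with h | h
    · obtain ⟨T, h1, h2⟩ := IHk h
      by_cases hk : k < n
      · have hne : (⟨k, hk⟩ : Fin n) ≠ i := by
          intro hc
          have : k = i.1 := congrArg Fin.val hc
          omega
        refine ⟨T * facP v ⟨k, hk⟩, ?_, ?_⟩
        · show ppP v k * _ = _
          rw [dif_pos hk, h1, mul_assoc, mul_assoc]
        · show ppP (dropV v i) k * _ = _
          rw [dif_pos hk, h2, facP_congr (dropV_apply_ne v hne), mul_assoc]
      · refine ⟨T, ?_, ?_⟩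
        · show ppP v k * _ = _
          rw [dif_neg hk, mul_one]
          exact h1
        · show ppP (dropV v i) k * _ = _
          rw [dif_neg hk, mul_one]
          exact h2
    · have hik2 : i.1 = k := by omega
      have hk : k < n := by
        have := i.isLt
        omega
      have hieq : (⟨k, hk⟩ : Fin n) = i := Fin.ext (by simp [hik2])
      have hpp : ppP v i.1 = ppP v k := by rw [hik2]
      have hppd : ppP (dropV v i) k = ppP v k :=
        ppP_congr k (fun j hj => dropV_apply_ne v (by
          intro hc
          have : j.1 = i.1 := congrArg Fin.val hc
          omega))
      refine ⟨1, ?_, ?_⟩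
      · show ppP v k * _ = _
        rw [dif_pos hk, hieq, mul_one, hpp]
      · show ppP (dropV v i) k * _ = _
        rw [dif_pos hk, hieq, hpp, hppd]
        have hfac1 : facP (dropV v i) i = 1 := facP_top (dropV_apply_self v i)
        rw [hfac1, mul_one]

lemma absLe_drop {v : V n} {i : Fin n} (hi : i ∈ suppV v) :
    absLe (FP (dropV v i)) (FP v) := by
  have hne := mem_suppV.1 hi
  obtain ⟨T, h1, h2⟩ := drop_factor hne n i.isLt
  set jv : Fin n := ⟨(v i).1, lt_of_le_of_lt (Nat.le_of_lt_succ (v i).isLt) i.isLt⟩ with hjv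
  have hjvi : jv ≠ i := by
    have h5 := vlt_of_ne_top hne
    intro hc
    have h6 : jv.1 = i.1 := congrArg Fin.val hc
    have h7 : jv.1 = (v i).1 := rfl
    omega
  have hswap : facP v i = Equiv.swap jv i := facP_swap hne
  have hinv : (FP (dropV v i))⁻¹ * FP v = T⁻¹ * (Equiv.swap jv i * T) := by
    show (ppP (dropV v i) n)⁻¹ * ppP v n = _
    rw [h1, h2, hswap]
    group
  have hconj : T⁻¹ * (Equiv.swap jv i * T) = Equiv.swap (T⁻¹ jv) (T⁻¹ i) := by
    rw [Equiv.swap_apply_apply, inv_inv, mul_assoc]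
  have habs1 : absLength ((FP (dropV v i))⁻¹ * FP v) = 1 := by
    rw [hinv, hconj]
    exact absLength_swap (fun hc => hjvi (T⁻¹.injective hc))
  unfold absLe
  rw [absLength_FP, absLength_FP, habs1]
  have := rankV_dropV hi
  omega

end RankSide


section Assembly
open Equiv

variable {n : ℕ}

def A0 (n : ℕ) : Finset (Fin n) := Finset.univ.filter (fun i => 0 < i.1)

lemma A0_pos : ∀ i ∈ A0 n, 0 < i.1 := fun i hi => (Finset.mem_filter.1 hi).2

lemma suppV_subset_A0 (v : V n) : suppV v ⊆ A0 n := by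
  intro i hi
  rw [mem_suppV] at hi
  rw [A0, Finset.mem_filter]
  refine ⟨Finset.mem_univ i, ?_⟩
  by_contra hcon
  push_neg at hcon
  apply hi
  have h0 : i.1 = 0 := by omega
  apply Fin.ext
  have h1 : (v i).1 < i.1 + 1 := (v i).isLt
  have h2 : (Fin.last i.1).1 = i.1 := rfl
  omega

lemma card_absLevel (k : ℕ) : (absLevel n k).card = ew (A0 n) k := by
  classical
  have himg : absLevel n k = (Finset.univ.filter (fun v : V n => rankV v = k)).image FP := by
    ext π
    simp only [absLevel, Finset.mem_filter, Finset.mem_univ, true_and, Finset.mem_image]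
    constructor
    · intro h
      obtain ⟨v, rfl⟩ := FP_bijective.2 π
      exact ⟨v, by rw [← absLength_FP]; exact h, rfl⟩
    · rintro ⟨v, hv, rfl⟩
      rw [absLength_FP]
      exact hv
  rw [himg, Finset.card_image_of_injective _ FP_injective]
  rw [← count_rank (A0 n) k]
  congr 1
  ext v
  simp only [Finset.mem_filter, Finset.mem_univ, true_and]
  constructor
  · intro h; exact ⟨suppV_subset_A0 v, h⟩
  · rintro ⟨-, h⟩; exact h

end Assembly

end AbsNM

open AbsNM

/-- `S_n` under absolute order satisfies the normalized matching condition
downward between consecutive levels: for `0 ≤ r ≤ n-2` and `Y ⊆ L_{r+1}`, with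
`D(Y) = {σ ∈ L_r : ∃ π ∈ Y, σ ≤_T π}`, one has
`|Y| · |L_r| ≤ |D(Y)| · |L_{r+1}|`. -/
theorem absolute_order_normalized_matching_down (n r : ℕ) (hr : r ≤ n - 2)
    (Y : Finset (Equiv.Perm (Fin n))) (hY : Y ⊆ absLevel n (r + 1)) :
    Y.card * (absLevel n r).card ≤
      ((absLevel n r).filter fun σ => ∃ π ∈ Y, absLe σ π).card *
        (absLevel n (r + 1)).card := by
  classical
  set Yh := Finset.univ.filter (fun v : V n => FP v ∈ Y) with hYh
  have hspec : ∀ v ∈ Yh, suppV v ⊆ A0 n ∧ rankV v = r + 1 := by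
    intro v hv
    refine ⟨suppV_subset_A0 v, ?_⟩
    have h1 : FP v ∈ absLevel n (r+1) := hY (Finset.mem_filter.1 hv).2
    have h2 := (Finset.mem_filter.1 h1).2
    rwa [absLength_FP] at h2
  have hcard : Yh.card = Y.card := by
    have himg : Yh.image FP = Y := by
      ext π
      simp only [hYh, Finset.mem_image, Finset.mem_filter, Finset.mem_univ, true_and]
      constructor
      · rintro ⟨v, hv, rfl⟩; exact hv
      · intro h
        obtain ⟨v, rfl⟩ := FP_bijective.2 π
        exact ⟨v, h, rfl⟩
    rw [← himg, Finset.card_image_of_injective _ FP_injective]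
  have hNM := colored_NM (A0 n) A0_pos r Yh hspec
  have hD : (bnd Yh).card ≤ ((absLevel n r).filter fun σ => ∃ π ∈ Y, absLe σ π).card := by
    rw [← Finset.card_image_of_injective (bnd Yh) FP_injective]
    apply Finset.card_le_card
    intro π hπ
    obtain ⟨u, hu, rfl⟩ := Finset.mem_image.1 hπ
    obtain ⟨v, hv, i, hi, rfl⟩ := mem_bnd.1 hu
    have hvY : FP v ∈ Y := (Finset.mem_filter.1 hv).2
    have hrank : rankV v = r + 1 := (hspec v hv).2
    rw [Finset.mem_filter]
    refine ⟨?_, FP v, hvY, absLe_drop hi⟩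
    rw [absLevel, Finset.mem_filter]
    refine ⟨Finset.mem_univ _, ?_⟩
    rw [absLength_FP]
    have := rankV_dropV hi
    omega
  calc Y.card * (absLevel n r).card
      = ew (A0 n) r * Yh.card := by
        rw [hcard, card_absLevel]
        ring
    _ ≤ ew (A0 n) (r+1) * (bnd Yh).card := hNM
    _ = (bnd Yh).card * ew (A0 n) (r+1) := Nat.mul_comm _ _
    _ ≤ ((absLevel n r).filter fun σ => ∃ π ∈ Y, absLe σ π).card * ew (A0 n) (r+1) :=
        Nat.mul_le_mul_right _ hD
    _ = ((absLevel n r).filter fun σ => ∃ π ∈ Y, absLe σ π).card *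
        (absLevel n (r + 1)).card := by
        rw [card_absLevel]
end

section
/- Let P be a finite partially ordered set equipped with a rank function r : P → ℕ such that whenever y covers x in P one has r(y) = r(x) + 1, and such that every element of rank k+1 is above some element of rank k and every element of rank k (with level k+1 nonempty) is below some element of rank k+1. For k ≥ 0 let L_k = {x ∈ P : r(x) = k}. Suppose that for every k and every X ⊆ L_k, writing D(X) = {y ∈ L_{k+1} : ∃ x ∈ X, x ≤ y}, one has |X| · |L_{k+1}| ≤ |D(X)| · |L_k|, and symmetrically for every Y ⊆ L_{k+1}, writing D'(Y) = {x ∈ L_k : ∃ y ∈ Y, x ≤ y}, one has |Y| · |L_k| ≤ |D'(Y)| · |L_{k+1}|. Then P is Sperner: every antichain A in P satisfies |A| ≤ max_k |L_k|. -/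
/-- The level `L_k` of a finite ranked poset: all elements of rank `k`. -/
def rankLevel {P : Type*} [Fintype P] (r : P → ℕ) (k : ℕ) : Finset P :=
  Finset.univ.filter fun x => r x = k

/-- Auxiliary "pushing down" construction used in the proof of the Sperner
property: starting from the top level `N`, repeatedly take the elements of the
antichain at the current level together with the downward shadow of what was
collected so far. -/
def pushDown {P : Type*} [Fintype P] [PartialOrder P] [DecidableEq P]
    [DecidableRel ((· ≤ ·) : P → P → Prop)]
    (r : P → ℕ) (A : Finset P) (N : ℕ) : ℕ → Finset P
  | 0 => ∅
  | i + 1 => (A.filter fun x => r x = N - i) ∪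
      ((rankLevel r (N - i)).filter fun x => ∃ y ∈ pushDown r A N i, x ≤ y)

/-- A finite graded poset (rank compatible with the covering relation, with
consecutive levels connected up and down) satisfying the normalized matching
condition in both directions between every pair of consecutive levels is
Sperner: every antichain is at most as large as the largest level. -/
theorem normalized_matching_implies_sperner {P : Type*} [Fintype P]
    [PartialOrder P] [DecidableEq P]
    [DecidableRel ((· ≤ ·) : P → P → Prop)] (r : P → ℕ)
    (hcov : ∀ x y : P, x ⋖ y → r y = r x + 1)
    (hup : ∀ y : P, ∀ k : ℕ, r y = k + 1 → ∃ x : P, r x = k ∧ x ≤ y)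
    (hdown : ∀ x : P, ∀ k : ℕ, r x = k → (rankLevel r (k + 1)).Nonempty →
      ∃ y : P, r y = k + 1 ∧ x ≤ y)
    (hnmc_up : ∀ k : ℕ, ∀ X : Finset P, X ⊆ rankLevel r k →
      X.card * (rankLevel r (k + 1)).card ≤
        ((rankLevel r (k + 1)).filter fun y => ∃ x ∈ X, x ≤ y).card *
          (rankLevel r k).card)
    (hnmc_down : ∀ k : ℕ, ∀ Y : Finset P, Y ⊆ rankLevel r (k + 1) →
      Y.card * (rankLevel r k).card ≤
        ((rankLevel r k).filter fun x => ∃ y ∈ Y, x ≤ y).card *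
          (rankLevel r (k + 1)).card)
    (A : Finset P) (hA : IsAntichain (· ≤ ·) (A : Set P)) :
    A.card ≤ (Finset.image r Finset.univ).sup fun k => (rankLevel r k).card := by
  set N := Finset.univ.sup r with hN
  -- the pushed-down sets live in the appropriate level
  have hsub : ∀ i, pushDown r A N i ⊆ rankLevel r (N + 1 - i) := by
    intro i
    induction i with
    | zero => simp [pushDown]
    | succ i ih =>
      have h1 : N + 1 - (i + 1) = N - i := by omega
      rw [h1]
      intro x hx
      rw [pushDown] at hx
      rcases Finset.mem_union.mp hx with hx | hx
      · simp only [rankLevel, Finset.mem_filter, Finset.mem_univ, true_and]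
        exact (Finset.mem_filter.mp hx).2
      · exact (Finset.mem_filter.mp hx).1
  -- every pushed-down element lies below an element of the antichain of high rank
  have hdom : ∀ i, ∀ b ∈ pushDown r A N i, ∃ a ∈ A, b ≤ a ∧ N + 1 - i ≤ r a := by
    intro i
    induction i with
    | zero => simp [pushDown]
    | succ i ih =>
      intro b hb
      rw [pushDown] at hb
      rcases Finset.mem_union.mp hb with hb | hb
      · obtain ⟨hbA, hbr⟩ := Finset.mem_filter.mp hb
        exact ⟨b, hbA, le_rfl, by omega⟩
      · obtain ⟨-, y, hy, hby⟩ := Finset.mem_filter.mp hb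
        obtain ⟨a, haA, hya, hra⟩ := ih y hy
        exact ⟨a, haA, hby.trans hya, le_trans (by omega) hra⟩
  -- the two parts of pushDown at a successor step are disjoint
  have hdisj : ∀ i ≤ N, Disjoint (A.filter fun x => r x = N - i)
      ((rankLevel r (N - i)).filter fun x => ∃ y ∈ pushDown r A N i, x ≤ y) := by
    intro i hi
    rw [Finset.disjoint_left]
    rintro x hx hx'
    obtain ⟨hxA, hxr⟩ := Finset.mem_filter.mp hx
    obtain ⟨-, y, hy, hxy⟩ := Finset.mem_filter.mp hx'
    obtain ⟨a, haA, hya, hra⟩ := hdom i y hy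
    have hne : x ≠ a := by
      intro h; subst h; omega
    exact hA (Finset.mem_coe.mpr hxA) (Finset.mem_coe.mpr haA) hne (hxy.trans hya)
  have hcard : ∀ i ≤ N, (pushDown r A N (i + 1)).card =
      (A.filter fun x => r x = N - i).card +
      ((rankLevel r (N - i)).filter fun x => ∃ y ∈ pushDown r A N i, x ≤ y).card := by
    intro i hi
    rw [pushDown]
    exact Finset.card_union_of_disjoint (hdisj i hi)
  -- the key normalized-matching step, in ℚ
  have hkey : ∀ i ≤ N,
      ((pushDown r A N i).card : ℚ) / ((rankLevel r (N + 1 - i)).card : ℚ) ≤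
      (((rankLevel r (N - i)).filter fun x => ∃ y ∈ pushDown r A N i, x ≤ y).card : ℚ) /
        ((rankLevel r (N - i)).card : ℚ) := by
    intro i hi
    have hNi : N + 1 - i = (N - i) + 1 := by omega
    have hsub' : pushDown r A N i ⊆ rankLevel r (N - i + 1) := by
      rw [← hNi]; exact hsub i
    have hnmc := hnmc_down (N - i) (pushDown r A N i) hsub'
    rcases Nat.eq_zero_or_pos (rankLevel r (N - i)).card with h0 | hpos
    · have hg0 : pushDown r A N i = ∅ := by
        rw [Finset.eq_empty_iff_forall_notMem]
        intro y hy
        have hry : r y = (N - i) + 1 := by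
          have := hsub' hy
          simpa [rankLevel] using this
        obtain ⟨x, hx, -⟩ := hup y (N - i) hry
        have hxm : x ∈ rankLevel r (N - i) := by simp [rankLevel, hx]
        rw [Finset.card_eq_zero.mp h0] at hxm
        exact absurd hxm (Finset.notMem_empty x)
      rw [hg0]
      simp
    · rcases Nat.eq_zero_or_pos (rankLevel r (N + 1 - i)).card with h1 | hpos1
      · have hg0 : pushDown r A N i = ∅ := by
          have := hsub i
          rw [Finset.card_eq_zero.mp h1] at this
          exact Finset.subset_empty.mp this
        rw [hg0]
        simp
      · rw [div_le_div_iff₀ (by exact_mod_cast hpos1) (by exact_mod_cast hpos)]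
        rw [hNi]
        exact_mod_cast hnmc
  -- main downward induction
  have hmain : ∀ i ≤ N + 1,
      ∑ j ∈ Finset.Ico (N + 1 - i) (N + 1),
        ((A.filter fun x => r x = j).card : ℚ) / ((rankLevel r j).card : ℚ)
      ≤ ((pushDown r A N i).card : ℚ) / ((rankLevel r (N + 1 - i)).card : ℚ) := by
    intro i
    induction i with
    | zero => intro _; simp [pushDown]
    | succ i ih =>
      intro hi
      have hi' : i ≤ N := by omega
      have h1 : N + 1 - (i + 1) = N - i := by omega
      have h2 : N - i + 1 = N + 1 - i := by omega
      have hlt : N - i < N + 1 := by omega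
      rw [h1, Finset.sum_eq_sum_Ico_succ_bot hlt, h2]
      have hIH := ih (by omega)
      have hstep := hkey i hi'
      have h3 := add_le_add_right (hIH.trans hstep)
        (((A.filter fun x => r x = N - i).card : ℚ) / ((rankLevel r (N - i)).card : ℚ))
      refine h3.trans (le_of_eq ?_)
      rw [hcard i hi']
      push_cast
      rw [← add_div]
  -- the LYM inequality
  have hLYM : ∑ j ∈ Finset.range (N + 1),
      ((A.filter fun x => r x = j).card : ℚ) / ((rankLevel r j).card : ℚ) ≤ 1 := by
    have h := hmain (N + 1) le_rfl
    have h0 : N + 1 - (N + 1) = 0 := by omega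
    rw [h0] at h
    rw [Finset.range_eq_Ico]
    refine h.trans ?_
    apply div_le_one_of_le₀
    · have := hsub (N + 1)
      rw [h0] at this
      exact_mod_cast Finset.card_le_card this
    · positivity
  -- conclude
  set M := (Finset.image r Finset.univ).sup fun k => (rankLevel r k).card with hM
  have hAN : ∀ x ∈ A, r x ∈ Finset.range (N + 1) := fun x _ =>
    Finset.mem_range.mpr (Nat.lt_succ_of_le (Finset.le_sup (Finset.mem_univ x)))
  have hAcard : A.card = ∑ k ∈ Finset.range (N + 1), (A.filter fun x => r x = k).card :=
    Finset.card_eq_sum_card_fiberwise hAN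
  have hterm : ∀ k, ((A.filter fun x => r x = k).card : ℚ) ≤
      (((A.filter fun x => r x = k).card : ℚ) / ((rankLevel r k).card : ℚ)) * M := by
    intro k
    rcases Nat.eq_zero_or_pos (A.filter fun x => r x = k).card with h0 | hpos
    · simp [h0]
    · obtain ⟨x, hx⟩ := Finset.card_pos.mp hpos
      obtain ⟨hxA, hxr⟩ := Finset.mem_filter.mp hx
      have hLmem : x ∈ rankLevel r k := by simp [rankLevel, hxr]
      have hLpos : 0 < (rankLevel r k).card := Finset.card_pos.mpr ⟨x, hLmem⟩
      have hkmem : k ∈ Finset.image r Finset.univ :=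
        Finset.mem_image.mpr ⟨x, Finset.mem_univ x, hxr⟩
      have hLM : (rankLevel r k).card ≤ M :=
        Finset.le_sup (f := fun k => (rankLevel r k).card) hkmem
      rw [div_mul_eq_mul_div, le_div_iff₀ (by exact_mod_cast hLpos)]
      have : ((A.filter fun x => r x = k).card : ℚ) * (rankLevel r k).card ≤
          ((A.filter fun x => r x = k).card : ℚ) * M := by
        apply mul_le_mul_of_nonneg_left _ (by positivity)
        exact_mod_cast hLM
      exact this
  have hfin : (A.card : ℚ) ≤ (M : ℚ) := by
    rw [hAcard]
    push_cast
    calc ∑ k ∈ Finset.range (N + 1), ((A.filter fun x => r x = k).card : ℚ)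
        ≤ ∑ k ∈ Finset.range (N + 1),
            (((A.filter fun x => r x = k).card : ℚ) / ((rankLevel r k).card : ℚ)) * M :=
          Finset.sum_le_sum fun k _ => hterm k
      _ = (∑ k ∈ Finset.range (N + 1),
            ((A.filter fun x => r x = k).card : ℚ) / ((rankLevel r k).card : ℚ)) * M :=
          (Finset.sum_mul _ _ _).symm
      _ ≤ 1 * M := mul_le_mul_of_nonneg_right hLYM (by positivity)
      _ = M := one_mul _
  exact_mod_cast hfin
end
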